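/- arXiv:2510.10133 — 3 statements merged into one kernel-verified Lean document; each statement's English description precedes it below -/
import Mathlib

section
/- The generating function for ρ(n), the number of partitions of n in which the largest part λ appears exactly once and the remaining parts form a partition of λ, satisfies ∑_{n≥0} ρ(n) q^n = 1/∏_{k≥1}(1−q^{2k}) − 1/(1−q^2), as an identity of formal power series in q. -/
open PowerSeries Finset

/-- The infinite product `(q^a; q^a)_∞ = ∏_{k ≥ 1} (1 - q^{a k})`, encoded as the formal
power series whose `n`-th coefficient is the (stabilized) `n`-th coefficient of the
partial products `∏_{k=1}^{n+1} (1 - q^{a k})`.  For `a ≥ 1` this agrees with the usual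
infinite product since factors with `a k > n` do not affect the coefficient of `q^n`. -/
noncomputable def eulerProd (a : ℕ) : PowerSeries ℚ :=
  PowerSeries.mk fun n =>
    PowerSeries.coeff n (∏ k ∈ Finset.range (n + 1), (1 - (PowerSeries.X : PowerSeries ℚ) ^ (a * (k + 1))))

/-- `ρ(n)`: the number of partitions of `n` in which the largest part `m` appears exactly
once and the remaining parts form a partition of `m`. -/
noncomputable def rho (n : ℕ) : ℕ :=
  Nat.card {p : n.Partition // ∃ m ∈ p.parts, p.parts.count m = 1 ∧
    (∀ x ∈ p.parts, x ≤ m) ∧ (p.parts.erase m).sum = m}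


namespace RhoAux

noncomputable section

open scoped Classical

/-- A convenience constructor for the power series whose coefficients indicate a subset. -/
def indicatorSeries (α : Type*) [Semiring α] (s : Set ℕ) : PowerSeries α :=
  PowerSeries.mk fun n => if n ∈ s then 1 else 0

variable {α : Type*}

theorem coeff_indicator (s : Set ℕ) [Semiring α] (n : ℕ) :
    coeff n (indicatorSeries α s) = if n ∈ s then 1 else 0 :=
  coeff_mk _ _

theorem constantCoeff_indicator (s : Set ℕ) [Semiring α] :
    constantCoeff (indicatorSeries α s) = if 0 ∈ s then 1 else 0 :=
  rfl

theorem num_series' [Field α] (i : ℕ) :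
    (1 - (X : PowerSeries α) ^ (i + 1))⁻¹ = indicatorSeries α {k | i + 1 ∣ k} := by
  rw [PowerSeries.inv_eq_iff_mul_eq_one]
  · ext n
    cases n with
    | zero => simp [mul_sub, zero_pow, constantCoeff_indicator]
    | succ n =>
      simp only [coeff_one, if_false, mul_sub, mul_one, coeff_indicator,
        LinearMap.map_sub, reduceCtorEq]
      simp_rw [coeff_mul, coeff_X_pow, coeff_indicator, @boole_mul _ _ _ _]
      simp only [Set.mem_setOf_eq]; erw [sum_ite, sum_ite]
      simp_rw [@filter_filter _ _ _ _ _, sum_const_zero, add_zero, sum_const, nsmul_eq_mul, mul_one,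
        sub_eq_iff_eq_add, zero_add]
      symm
      split_ifs with h
      · suffices #{a ∈ antidiagonal (n + 1) | i + 1 ∣ a.fst ∧ a.snd = i + 1} = 1 by
          convert congr_arg ((↑) : ℕ → α) this; norm_cast
        rw [card_eq_one]
        cases' h with p hp
        refine ⟨((i + 1) * (p - 1), i + 1), ?_⟩
        ext ⟨a₁, a₂⟩
        simp only [mem_filter, Prod.mk_inj, HasAntidiagonal.mem_antidiagonal, mem_singleton]
        constructor
        · rintro ⟨a_left, ⟨a, rfl⟩, rfl⟩
          refine ⟨?_, rfl⟩
          rw [Nat.mul_sub_left_distrib, ← hp, ← a_left, mul_one, Nat.add_sub_cancel]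
        · rintro ⟨rfl, rfl⟩
          match p with
          | 0 => rw [mul_zero] at hp; cases hp
          | p + 1 => rw [hp]; simp [mul_add]
      · suffices #{a ∈ antidiagonal (n + 1) | i + 1 ∣ a.fst ∧ a.snd = i + 1} = 0 by
          convert congr_arg ((↑) : ℕ → α) this; norm_cast
        rw [card_eq_zero]
        apply eq_empty_of_forall_notMem
        simp only [Prod.forall, mem_filter, not_and, HasAntidiagonal.mem_antidiagonal]
        rintro _ h₁ h₂ ⟨a, rfl⟩ rfl
        apply h
        simp [← h₂]
  · simp [zero_pow]

-- The main workhorse of the partition theorem proof.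
theorem partialGF_prop (α : Type*) [CommSemiring α] (n : ℕ) (s : Finset ℕ) (hs : ∀ i ∈ s, 0 < i)
    (c : ℕ → Set ℕ) (hc : ∀ i, i ∉ s → 0 ∈ c i) :
    #{p : n.Partition | (∀ j, p.parts.count j ∈ c j) ∧ ∀ j ∈ p.parts, j ∈ s} =
      coeff n (∏ i ∈ s, indicatorSeries α ((· * i) '' c i)) := by
  simp_rw [coeff_prod, coeff_indicator, prod_boole, sum_boole]
  apply congr_arg
  simp only [mem_univ, forall_true_left, not_and, not_forall, exists_prop,
    Set.mem_image, not_exists]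
  set φ : (a : Nat.Partition n) →
    a ∈ filter (fun p ↦ (∀ (j : ℕ), Multiset.count j p.parts ∈ c j) ∧ ∀ j ∈ p.parts, j ∈ s) univ →
    ℕ →₀ ℕ := fun p _ => {
      toFun := fun i => Multiset.count i p.parts • i
      support := Finset.filter (fun i => i ≠ 0) p.parts.toFinset
      mem_support_toFun := fun a => by
        simp only [smul_eq_mul, ne_eq, mul_eq_zero, Multiset.count_eq_zero]
        rw [not_or, not_not]
        simp only [Multiset.mem_toFinset, not_not, mem_filter] }
  refine Finset.card_bij φ ?_ ?_ ?_
  · intro a ha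
    simp only [φ, not_forall, not_exists, not_and, exists_prop, mem_filter]
    rw [mem_finsuppAntidiag]
    dsimp only [ne_eq, smul_eq_mul, id_eq, eq_mpr_eq_cast, le_eq_subset, Finsupp.coe_mk]
    simp only [mem_univ, forall_true_left, not_and, not_forall, exists_prop,
      mem_filter, true_and] at ha
    refine ⟨⟨?_, fun i ↦ ?_⟩, fun i _ ↦ ⟨a.parts.count i, ha.1 i, rfl⟩⟩
    · conv_rhs => simp [← a.parts_sum]
      rw [sum_multiset_count_of_subset _ s]
      · simp only [smul_eq_mul]
      · intro i
        simp only [Multiset.mem_toFinset, not_not, mem_filter]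
        apply ha.2
    · simp only [ne_eq, Multiset.mem_toFinset, not_not, mem_filter, and_imp]
      exact fun hi _ ↦ ha.2 i hi
  · intro p₁ hp₁ p₂ hp₂ h
    apply Nat.Partition.ext
    simp only [true_and, mem_univ, mem_filter] at hp₁ hp₂
    ext i
    simp only [φ, ne_eq, Multiset.mem_toFinset, not_not, smul_eq_mul, Finsupp.mk.injEq] at h
    by_cases hi : i = 0
    · rw [hi]
      rw [Multiset.count_eq_zero_of_notMem]
      · rw [Multiset.count_eq_zero_of_notMem]
        intro a; exact Nat.lt_irrefl 0 (hs 0 (hp₂.2 0 a))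
      intro a; exact Nat.lt_irrefl 0 (hs 0 (hp₁.2 0 a))
    · rw [← mul_left_inj' hi]
      rw [funext_iff] at h
      exact h.2 i
  · simp only [φ, mem_filter, mem_finsuppAntidiag, mem_univ, exists_prop, true_and, and_assoc]
    rintro f ⟨hf, hf₃, hf₄⟩
    have hf' : f ∈ finsuppAntidiag s n := mem_finsuppAntidiag.mpr ⟨hf, hf₃⟩
    simp only [mem_finsuppAntidiag] at hf'
    refine ⟨⟨∑ i ∈ s, Multiset.replicate (f i / i) i, ?_, ?_⟩, ?_, ?_, ?_⟩
    · intro i hi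
      simp only [exists_prop, Multiset.mem_sum, mem_map, Function.Embedding.coeFn_mk] at hi
      rcases hi with ⟨t, ht, z⟩
      apply hs
      rwa [Multiset.eq_of_mem_replicate z]
    · simp_rw [Multiset.sum_sum, Multiset.sum_replicate, Nat.nsmul_eq_mul]
      rw [← hf'.1]
      refine sum_congr rfl fun i hi => Nat.div_mul_cancel ?_
      rcases hf₄ i hi with ⟨w, _, hw₂⟩
      rw [← hw₂]
      exact dvd_mul_left _ _
    · intro i
      simp_rw [Multiset.count_sum', Multiset.count_replicate, sum_ite_eq']
      split_ifs with h
      · rcases hf₄ i h with ⟨w, hw₁, hw₂⟩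
        rwa [← hw₂, Nat.mul_div_cancel _ (hs i h)]
      · exact hc _ h
    · intro i hi
      rw [Multiset.mem_sum] at hi
      rcases hi with ⟨j, hj₁, hj₂⟩
      rwa [Multiset.eq_of_mem_replicate hj₂]
    · ext i
      simp_rw [Multiset.count_sum', Multiset.count_replicate, sum_ite_eq']
      simp only [ne_eq, Multiset.mem_toFinset, not_not, smul_eq_mul, ite_mul,
        zero_mul, Finsupp.coe_mk]
      split_ifs with h
      · apply Nat.div_mul_cancel
        rcases hf₄ i h with ⟨w, _, hw₂⟩
        apply Dvd.intro_left _ hw₂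
      · apply symm
        rw [← Finsupp.notMem_support_iff]
        exact notMem_mono hf'.2 h

end

end RhoAux
namespace RhoAux
noncomputable section
open scoped Classical

def mkEven : ℕ ↪ ℕ := ⟨fun i => 2 * (i + 1), fun x y h => by dsimp only at h; omega⟩

def partialEvenGF (m : ℕ) : PowerSeries ℚ :=
  ∏ i ∈ range m, (1 - (X : PowerSeries ℚ) ^ (2 * (i + 1)))⁻¹

theorem partialEvenGF_prop (n m : ℕ) :
    #{p : n.Partition | ∀ j ∈ p.parts, j ∈ (range m).map mkEven} =
      coeff n (partialEvenGF m) := by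
  rw [partialEvenGF]
  convert partialGF_prop ℚ n ((range m).map mkEven) _ (fun _ => Set.univ)
    (fun _ _ => trivial) using 2
  · rfl
  · congr
    simp only [true_and, forall_const, Set.mem_univ]
  · rw [Finset.prod_map]
    simp only [mkEven, Function.Embedding.coeFn_mk]
    simp_rw [show ∀ x : ℕ, 2 * (x + 1) = 2 * x + 1 + 1 from fun x => by omega, num_series']
    congr! 2 with x
    ext k
    constructor
    · rintro ⟨p, rfl⟩
      refine ⟨p, ⟨⟩, ?_⟩
      apply mul_comm
    rintro ⟨a_w, -, rfl⟩
    apply Dvd.intro_left a_w rfl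
  · intro i
    rw [mem_map]
    rintro ⟨a, -, rfl⟩
    show 0 < 2 * (a + 1); omega

theorem evenGF_prop (n m : ℕ) (h : n < 2 * m) :
    #{p : n.Partition | ∀ j ∈ p.parts, 2 ∣ j} = coeff n (partialEvenGF m) := by
  rw [← partialEvenGF_prop]
  congr with p
  apply forall₂_congr
  intro i hi
  have hin : i ≤ n := by
    simpa [p.parts_sum] using Multiset.single_le_sum (fun _ _ => Nat.zero_le _) _ hi
  have hpos : 0 < i := p.parts_pos hi
  simp only [mkEven, exists_prop, mem_range, Function.Embedding.coeFn_mk, mem_map]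
  constructor
  · rintro ⟨k, rfl⟩
    exact ⟨k - 1, by omega, by show 2 * (k - 1 + 1) = 2 * k; omega⟩
  · rintro ⟨a, -, rfl⟩
    exact ⟨a + 1, rfl⟩

/-- Doubling all parts of a partition of `m` gives a partition of `2 * m`. -/
def doubleP (m : ℕ) (q : m.Partition) : (2 * m).Partition where
  parts := q.parts.map (fun x => 2 * x)
  parts_pos := by
    intro j hj
    rw [Multiset.mem_map] at hj
    obtain ⟨x, hx, rfl⟩ := hj
    have := q.parts_pos hx
    omega
  parts_sum := by
    rw [Multiset.sum_map_mul_left]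
    simp [q.parts_sum]

theorem card_evens_eq (m : ℕ) :
    #{p : (2 * m).Partition | ∀ j ∈ p.parts, 2 ∣ j} = Fintype.card m.Partition := by
  rw [← Finset.card_univ]
  symm
  apply Finset.card_bij (fun q _ => doubleP m q)
  · intro q _
    simp only [mem_filter, mem_univ, true_and, doubleP]
    intro j hj
    rw [Multiset.mem_map] at hj
    obtain ⟨x, -, rfl⟩ := hj
    exact Dvd.intro x rfl
  · intro q₁ _ q₂ _ h
    apply Nat.Partition.ext
    have := congr_arg Nat.Partition.parts h
    simp only [doubleP] at this
    exact Multiset.map_injective (fun a b hab => by omega) this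
  · intro p hp
    simp only [mem_filter, mem_univ, true_and] at hp
    have hsum : (p.parts.map (fun x => x / 2)).sum = m := by
      have h2 : (p.parts.map (fun x => 2 * (x / 2))).sum = p.parts.sum := by
        congr 1
        refine (Multiset.map_congr rfl ?_).trans (Multiset.map_id _)
        intro x hx
        obtain ⟨k, rfl⟩ := hp x hx
        simp [Nat.mul_div_cancel_left _ two_pos]
      rw [show (fun x => 2 * (x / 2)) = (fun x => 2 * ((fun y => y / 2) x)) from rfl,
        Multiset.sum_map_mul_left, p.parts_sum] at h2
      omega
    refine ⟨⟨p.parts.map (fun x => x / 2), ?_, hsum⟩, mem_univ _, ?_⟩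
    · intro j hj
      rw [Multiset.mem_map] at hj
      obtain ⟨x, hx, rfl⟩ := hj
      have h1 := p.parts_pos hx
      obtain ⟨k, rfl⟩ := hp x hx
      omega
    · apply Nat.Partition.ext
      simp only [doubleP, Multiset.map_map]
      refine (Multiset.map_congr rfl ?_).trans (Multiset.map_id _)
      intro x hx
      obtain ⟨k, rfl⟩ := hp x hx
      simp [Nat.mul_div_cancel_left _ two_pos, Function.comp]

theorem card_evens_odd (n : ℕ) (h : ¬ 2 ∣ n) :
    #{p : n.Partition | ∀ j ∈ p.parts, 2 ∣ j} = 0 := by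
  rw [Finset.card_eq_zero]
  apply Finset.eq_empty_of_forall_notMem
  intro p hp
  simp only [mem_filter, mem_univ, true_and] at hp
  exact h (p.parts_sum ▸ Multiset.dvd_sum hp)

end
end RhoAux
namespace RhoAux
noncomputable section
open scoped Classical

/-- The partial product `∏_{k=0}^{n} (1 - X^{2(k+1)})`. -/
def P (n : ℕ) : PowerSeries ℚ :=
  ∏ k ∈ Finset.range (n + 1), (1 - (X : PowerSeries ℚ) ^ (2 * (k + 1)))

theorem constantCoeff_P (n : ℕ) : constantCoeff (P n) = 1 := by
  rw [P, map_prod]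
  apply Finset.prod_eq_one
  intro k _
  simp [zero_pow]

theorem coeff_P_stable {m n : ℕ} (h : m ≤ n) : coeff m (P n) = coeff m (P m) := by
  induction n with
  | zero =>
    have : m = 0 := by omega
    subst this; rfl
  | succ n ih =>
    rcases Nat.lt_or_ge m (n + 1) with h' | h'
    · rw [← ih (by omega), P, prod_range_succ, ← P, mul_sub, mul_one, map_sub]
      have hz : coeff m (P n * X ^ (2 * (n + 1 + 1))) = 0 := by
        have hd : (X : PowerSeries ℚ) ^ (m + 1) ∣ P n * X ^ (2 * (n + 1 + 1)) :=
          dvd_mul_of_dvd_right (pow_dvd_pow X (by omega)) _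
        exact (X_pow_dvd_iff.mp hd) m (by omega)
      rw [hz, sub_zero]
    · have hmn : m = n + 1 := by omega
      subst hmn
      rfl

theorem coeff_eulerProd (m : ℕ) : coeff m (eulerProd 2) = coeff m (P m) :=
  coeff_mk _ _

theorem constantCoeff_eulerProd : constantCoeff (eulerProd 2) = 1 := by
  rw [← coeff_zero_eq_constantCoeff, coeff_eulerProd, coeff_zero_eq_constantCoeff,
    constantCoeff_P]

theorem X_pow_dvd_eulerProd_sub (n : ℕ) :
    (X : PowerSeries ℚ) ^ (n + 1) ∣ eulerProd 2 - P n := by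
  rw [X_pow_dvd_iff]
  intro m hm
  rw [map_sub, coeff_eulerProd, coeff_P_stable (by omega : m ≤ n), sub_self]

theorem inv_congr {A B : PowerSeries ℚ} (hA : constantCoeff A ≠ 0)
    (hB : constantCoeff B ≠ 0) {d : ℕ} (h : (X : PowerSeries ℚ) ^ d ∣ A - B) :
    (X : PowerSeries ℚ) ^ d ∣ A⁻¹ - B⁻¹ := by
  have h1 : A⁻¹ * A = 1 := PowerSeries.inv_mul_cancel _ hA
  have h2 : B * B⁻¹ = 1 := PowerSeries.mul_inv_cancel _ hB
  have key : A⁻¹ - B⁻¹ = A⁻¹ * (B - A) * B⁻¹ := by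
    calc A⁻¹ - B⁻¹ = A⁻¹ * (B * B⁻¹) - A⁻¹ * A * B⁻¹ := by rw [h1, h2]; ring
    _ = A⁻¹ * (B - A) * B⁻¹ := by ring
  have h' : (X : PowerSeries ℚ) ^ d ∣ B - A := by
    rw [← neg_sub]; exact dvd_neg.mpr h
  rw [key]
  exact (h'.mul_left _).mul_right _

theorem P_inv (n : ℕ) : (P n)⁻¹ = partialEvenGF (n + 1) := by
  rw [PowerSeries.inv_eq_iff_mul_eq_one (by rw [constantCoeff_P]; exact one_ne_zero)]
  rw [partialEvenGF, P, ← Finset.prod_mul_distrib]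
  apply Finset.prod_eq_one
  intro k _
  exact PowerSeries.inv_mul_cancel _ (by simp [zero_pow])

theorem coeff_eulerProd_inv (n : ℕ) :
    coeff n (eulerProd 2)⁻¹ = coeff n (partialEvenGF (n + 1)) := by
  have h := inv_congr (A := eulerProd 2) (B := P n)
    (by rw [constantCoeff_eulerProd]; exact one_ne_zero)
    (by rw [constantCoeff_P]; exact one_ne_zero)
    (X_pow_dvd_eulerProd_sub n)
  have h0 := (X_pow_dvd_iff.mp h) n (by omega)
  rw [map_sub, sub_eq_zero] at h0
  rw [h0, P_inv]

theorem coeff_geom (n : ℕ) :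
    coeff n (1 - (X : PowerSeries ℚ) ^ 2)⁻¹ = if 2 ∣ n then 1 else 0 := by
  have h := num_series' (α := ℚ) 1
  norm_num at h
  rw [h, coeff_indicator]
  simp only [Set.mem_setOf_eq]

end
end RhoAux
namespace RhoAux
noncomputable section
open scoped Classical

theorem rho_eq_zero_of_odd (n : ℕ) (h : ¬ 2 ∣ n) : rho n = 0 := by
  rw [rho, Nat.card_eq_zero]
  left
  refine ⟨?_⟩
  rintro ⟨p, m, hm, hc, hle, hsum⟩
  have hps : p.parts.sum = m + (p.parts.erase m).sum := by
    rw [← Multiset.sum_cons, Multiset.cons_erase hm]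
  have h2 := p.parts_sum
  exact h ⟨m, by omega⟩

theorem rho_zero : rho 0 = 0 := by
  rw [rho, Nat.card_eq_zero]
  left
  refine ⟨?_⟩
  rintro ⟨p, m, hm, hc, hle, hsum⟩
  have hpos := p.parts_pos hm
  have hle' : m ≤ p.parts.sum := Multiset.single_le_sum (fun _ _ => Nat.zero_le _) _ hm
  have h2 := p.parts_sum
  omega

theorem mem_parts_iff_eq_indiscrete {m : ℕ} (hm : 0 < m) (q : m.Partition) :
    m ∈ q.parts ↔ q = Nat.Partition.indiscrete m := by
  constructor
  · intro hmem
    have hps : q.parts.sum = m + (q.parts.erase m).sum := by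
      rw [← Multiset.sum_cons, Multiset.cons_erase hmem]
    have h2 := q.parts_sum
    have herz : (q.parts.erase m).sum = 0 := by omega
    have herase : q.parts.erase m = 0 := by
      apply Multiset.eq_zero_of_forall_notMem
      intro x hx
      have hxp := q.parts_pos (Multiset.mem_of_mem_erase hx)
      have hxle : x ≤ (q.parts.erase m).sum :=
        Multiset.single_le_sum (fun _ _ => Nat.zero_le _) _ hx
      omega
    apply Nat.Partition.ext
    rw [Nat.Partition.indiscrete_parts hm.ne', ← Multiset.cons_erase hmem, herase]
    rfl
  · rintro rfl
    rw [Nat.Partition.indiscrete_parts hm.ne']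
    exact Multiset.mem_singleton_self m

theorem rho_two_mul (m : ℕ) (hm : 0 < m) : rho (2 * m) = Fintype.card m.Partition - 1 := by
  rw [rho]
  have key : ∀ p : (2 * m).Partition,
      (∃ m' ∈ p.parts, p.parts.count m' = 1 ∧ (∀ x ∈ p.parts, x ≤ m') ∧
        (p.parts.erase m').sum = m') ↔ (m ∈ p.parts ∧ p.parts.count m = 1) := by
    intro p
    constructor
    · rintro ⟨m', hm', hc, hle, hsum⟩
      have hps : p.parts.sum = m' + (p.parts.erase m').sum := by
        rw [← Multiset.sum_cons, Multiset.cons_erase hm']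
      have h2 := p.parts_sum
      have hmm : m' = m := by omega
      subst hmm
      exact ⟨hm', hc⟩
    · rintro ⟨hmem, hc⟩
      have hps : p.parts.sum = m + (p.parts.erase m).sum := by
        rw [← Multiset.sum_cons, Multiset.cons_erase hmem]
      have h2 := p.parts_sum
      refine ⟨m, hmem, hc, ?_, by omega⟩
      intro x hx
      by_contra hlt
      push_neg at hlt
      have hxne : x ≠ m := by omega
      have hxe : x ∈ p.parts.erase m := (Multiset.mem_erase_of_ne hxne).mpr hx
      have hx_le : x ≤ (p.parts.erase m).sum :=
        Multiset.single_le_sum (fun _ _ => Nat.zero_le _) _ hxe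
      omega
  rw [Nat.card_congr (Equiv.subtypeEquivRight key)]
  have e2 : {p : (2 * m).Partition // m ∈ p.parts ∧ p.parts.count m = 1} ≃
      {q : m.Partition // m ∉ q.parts} :=
    { toFun := fun x => ⟨⟨x.1.parts.erase m,
        fun hj => x.1.parts_pos (Multiset.mem_of_mem_erase hj), by
          have hps : x.1.parts.sum = m + (x.1.parts.erase m).sum := by
            rw [← Multiset.sum_cons, Multiset.cons_erase x.2.1]
          have h2 := x.1.parts_sum
          omega⟩, by
        simp only [← Multiset.count_eq_zero, Multiset.count_erase_self, x.2.2]⟩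
      invFun := fun y => ⟨⟨m ::ₘ y.1.parts, by
          intro j hj
          rcases Multiset.mem_cons.mp hj with rfl | hj'
          · exact hm
          · exact y.1.parts_pos hj', by
          rw [Multiset.sum_cons, y.1.parts_sum]; omega⟩, by
        constructor
        · exact Multiset.mem_cons_self m _
        · rw [Multiset.count_cons_self, Multiset.count_eq_zero.mpr y.2]⟩
      left_inv := fun x => by
        apply Subtype.ext
        apply Nat.Partition.ext
        exact Multiset.cons_erase x.2.1
      right_inv := fun y => by
        apply Subtype.ext
        apply Nat.Partition.ext
        exact Multiset.erase_cons_head m _ }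
  rw [Nat.card_congr e2]
  rw [Nat.card_congr (Equiv.subtypeEquivRight (fun q => not_congr
    (mem_parts_iff_eq_indiscrete hm q)))]
  rw [Nat.card_eq_fintype_card, Fintype.card_subtype_compl, Fintype.card_subtype_eq]

end
end RhoAux

/-- `∑_{n≥0} ρ(n) q^n = 1/(q^2;q^2)_∞ − 1/(1−q^2)`. -/
theorem rho_generating_function :
    PowerSeries.mk (fun n => (rho n : ℚ)) =
      (eulerProd 2)⁻¹ - (1 - (PowerSeries.X : PowerSeries ℚ) ^ 2)⁻¹ := by
  ext n
  rw [coeff_mk, map_sub, RhoAux.coeff_eulerProd_inv, RhoAux.coeff_geom,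
    ← RhoAux.evenGF_prop n (n + 1) (by omega)]
  by_cases h2 : 2 ∣ n
  · obtain ⟨m, rfl⟩ := h2
    rw [if_pos ⟨m, rfl⟩, RhoAux.card_evens_eq m]
    rcases Nat.eq_zero_or_pos m with rfl | hm
    · norm_num [RhoAux.rho_zero]
    · rw [RhoAux.rho_two_mul m hm]
      have hpos : 1 ≤ Fintype.card m.Partition := Fintype.card_pos
      rw [Nat.cast_sub hpos, Nat.cast_one]
  · rw [if_neg h2, RhoAux.card_evens_odd n h2, RhoAux.rho_eq_zero_of_odd n h2]
    simp
end

section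
/- The generating function for ρ̄(n) satisfies ∑_{n≥0} ρ̄(n) q^n = (q^4;q^4)_∞/(q^2;q^2)_∞^2 − 2/(1−q^2) + 1, as formal power series. -/
open PowerSeries Finset

noncomputable section RBAux

open scoped Classical

namespace RB

/-- indicator series -/
def indicatorSeries (α : Type*) [Semiring α] (s : Set ℕ) : PowerSeries α :=
  PowerSeries.mk fun n => if n ∈ s then 1 else 0

theorem coeff_indicator (s : Set ℕ) {α : Type*} [Semiring α] (n : ℕ) :
    coeff (R := α) n (indicatorSeries α s) = if n ∈ s then 1 else 0 :=
  coeff_mk _ _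

theorem constantCoeff_indicator (s : Set ℕ) {α : Type*} [Semiring α] :
    constantCoeff (indicatorSeries α s) = if 0 ∈ s then 1 else 0 :=
  rfl

theorem two_series (i : ℕ) {α : Type*} [Semiring α] :
    1 + (X : PowerSeries α) ^ i.succ = indicatorSeries α {0, i.succ} := by
  ext n
  simp only [coeff_indicator, coeff_one, coeff_X_pow, Set.mem_insert_iff, Set.mem_singleton_iff,
    map_add]
  cases' n with d
  · simp [(Nat.succ_ne_zero i).symm]
  · simp [Nat.succ_ne_zero d]

theorem num_series' {α : Type*} [Field α] (i : ℕ) :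
    (1 - (X : PowerSeries α) ^ (i + 1))⁻¹ = indicatorSeries α {k | i + 1 ∣ k} := by
  rw [PowerSeries.inv_eq_iff_mul_eq_one]
  · ext n
    cases n with
    | zero => simp [mul_sub, zero_pow, constantCoeff_indicator]
    | succ n =>
      simp only [coeff_one, if_false, mul_sub, mul_one, coeff_indicator,
        LinearMap.map_sub, reduceCtorEq]
      simp_rw [coeff_mul, coeff_X_pow, coeff_indicator, @boole_mul _ _ _ _]
      rw [@sum_ite _ _ _ _ _ (fun _ => Classical.propDecidable _), sum_ite]
      simp_rw [@filter_filter _ _ _ _ _, sum_const_zero, add_zero, sum_const, nsmul_eq_mul, mul_one,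
        sub_eq_iff_eq_add, zero_add]
      symm
      split_ifs with h
      · suffices #{a ∈ antidiagonal (n + 1) | i + 1 ∣ a.fst ∧ a.snd = i + 1} = 1 by
          simp only [Set.mem_setOf_eq]; convert congr_arg ((↑) : ℕ → α) this; norm_cast
        rw [card_eq_one]
        cases' h with p hp
        refine ⟨((i + 1) * (p - 1), i + 1), ?_⟩
        ext ⟨a₁, a₂⟩
        simp only [mem_filter, Prod.mk.injEq, HasAntidiagonal.mem_antidiagonal, mem_singleton]
        constructor
        · rintro ⟨a_left, ⟨a, rfl⟩, rfl⟩
          refine ⟨?_, rfl⟩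
          rw [Nat.mul_sub_left_distrib, ← hp, ← a_left, mul_one, Nat.add_sub_cancel]
        · rintro ⟨rfl, rfl⟩
          match p with
          | 0 => rw [mul_zero] at hp; cases hp
          | p + 1 => rw [hp]; simp [mul_add]
      · suffices #{a ∈ antidiagonal (n + 1) | i + 1 ∣ a.fst ∧ a.snd = i + 1} = 0 by
          simp only [Set.mem_setOf_eq]; convert congr_arg ((↑) : ℕ → α) this; norm_cast
        rw [card_eq_zero]
        apply eq_empty_of_forall_notMem
        simp only [Prod.forall, mem_filter, not_and, HasAntidiagonal.mem_antidiagonal]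
        rintro _ h₁ h₂ ⟨a, rfl⟩ rfl
        apply h
        simp [← h₂]
  · simp [zero_pow]

theorem partialGF_prop (α : Type*) [CommSemiring α] (n : ℕ) (s : Finset ℕ) (hs : ∀ i ∈ s, 0 < i)
    (c : ℕ → Set ℕ) (hc : ∀ i, i ∉ s → 0 ∈ c i) :
    #{p : n.Partition | (∀ j, p.parts.count j ∈ c j) ∧ ∀ j ∈ p.parts, j ∈ s} =
      coeff (R := α) n (∏ i ∈ s, indicatorSeries α ((· * i) '' c i)) := by
  simp_rw [coeff_prod, coeff_indicator, prod_boole, sum_boole]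
  apply congr_arg
  simp only [mem_univ, forall_true_left, not_and, not_forall, exists_prop,
    Set.mem_image, not_exists]
  set φ : (a : Nat.Partition n) →
    a ∈ filter (fun p ↦ (∀ (j : ℕ), Multiset.count j p.parts ∈ c j) ∧ ∀ j ∈ p.parts, j ∈ s) univ →
    ℕ →₀ ℕ := fun p _ => {
      toFun := fun i => Multiset.count i p.parts • i
      support := Finset.filter (fun i => i ≠ 0) p.parts.toFinset
      mem_support_toFun := fun a => by
        simp only [smul_eq_mul, ne_eq, mul_eq_zero, Multiset.count_eq_zero]
        rw [not_or, not_not]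
        simp only [Multiset.mem_toFinset, not_not, mem_filter] }
  refine Finset.card_bij φ ?_ ?_ ?_
  · intro a ha
    simp only [φ, not_forall, not_exists, not_and, exists_prop, mem_filter]
    rw [mem_finsuppAntidiag]
    dsimp only [ne_eq, smul_eq_mul, id_eq, eq_mpr_eq_cast, le_eq_subset, Finsupp.coe_mk]
    simp only [mem_univ, forall_true_left, not_and, not_forall, exists_prop,
      mem_filter, true_and] at ha
    refine ⟨⟨?_, fun i ↦ ?_⟩, fun i _ ↦ ⟨a.parts.count i, ha.1 i, rfl⟩⟩
    · conv_rhs => simp [← a.parts_sum]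
      rw [sum_multiset_count_of_subset _ s]
      · simp only [smul_eq_mul]
      · intro i
        simp only [Multiset.mem_toFinset, not_not, mem_filter]
        apply ha.2
    · simp only [ne_eq, Multiset.mem_toFinset, not_not, mem_filter, and_imp]
      exact fun hi _ ↦ ha.2 i hi
  · intro p₁ hp₁ p₂ hp₂ h
    apply Nat.Partition.ext
    simp only [true_and, mem_univ, mem_filter] at hp₁ hp₂
    ext i
    simp only [φ, ne_eq, Multiset.mem_toFinset, not_not, smul_eq_mul, Finsupp.mk.injEq] at h
    by_cases hi : i = 0
    · rw [hi]
      rw [Multiset.count_eq_zero_of_notMem]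
      · rw [Multiset.count_eq_zero_of_notMem]
        intro a; exact Nat.lt_irrefl 0 (hs 0 (hp₂.2 0 a))
      intro a; exact Nat.lt_irrefl 0 (hs 0 (hp₁.2 0 a))
    · rw [← mul_left_inj' hi]
      rw [funext_iff] at h
      exact h.2 i
  · simp only [φ, mem_filter, mem_finsuppAntidiag, mem_univ, exists_prop, true_and, and_assoc]
    rintro f ⟨hf, hf₃, hf₄⟩
    have hf' : f ∈ finsuppAntidiag s n := mem_finsuppAntidiag.mpr ⟨hf, hf₃⟩
    simp only [mem_finsuppAntidiag] at hf'
    refine ⟨⟨∑ i ∈ s, Multiset.replicate (f i / i) i, ?_, ?_⟩, ?_, ?_, ?_⟩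
    · intro i hi
      simp only [exists_prop, Multiset.mem_sum, mem_map, Function.Embedding.coeFn_mk] at hi
      rcases hi with ⟨t, ht, z⟩
      apply hs
      rwa [Multiset.eq_of_mem_replicate z]
    · simp_rw [Multiset.sum_sum, Multiset.sum_replicate, Nat.nsmul_eq_mul]
      rw [← hf'.1]
      refine sum_congr rfl fun i hi => Nat.div_mul_cancel ?_
      rcases hf₄ i hi with ⟨w, _, hw₂⟩
      rw [← hw₂]
      exact dvd_mul_left _ _
    · intro i
      simp_rw [Multiset.count_sum', Multiset.count_replicate, sum_ite_eq']
      split_ifs with h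
      · rcases hf₄ i h with ⟨w, hw₁, hw₂⟩
        rwa [← hw₂, Nat.mul_div_cancel _ (hs i h)]
      · exact hc _ h
    · intro i hi
      rw [Multiset.mem_sum] at hi
      rcases hi with ⟨j, hj₁, hj₂⟩
      rwa [Multiset.eq_of_mem_replicate hj₂]
    · ext i
      simp_rw [Multiset.count_sum', Multiset.count_replicate, sum_ite_eq']
      simp only [ne_eq, Multiset.mem_toFinset, not_not, smul_eq_mul, ite_mul,
        zero_mul, Finsupp.coe_mk]
      split_ifs with h
      · apply Nat.div_mul_cancel
        rcases hf₄ i h with ⟨w, _, hw₂⟩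
        apply Dvd.intro_left _ hw₂
      · apply symm
        rw [← Finsupp.notMem_support_iff]
        exact notMem_mono hf'.2 h

/-- number of partitions of `n` with distinct parts equals coefficient of partial distinct GF -/
theorem distinctGF_prop {α : Type*} [CommSemiring α] (n m : ℕ) (h : n < m + 1) :
    (#(Nat.Partition.distincts n) : α) =
      coeff (R := α) n (∏ i ∈ range m, (1 + (X : PowerSeries α) ^ (i + 1))) := by
  have base : #{p : n.Partition |
        p.parts.Nodup ∧ ∀ j ∈ p.parts, j ∈ (range m).map ⟨Nat.succ, Nat.succ_injective⟩} =
      coeff (R := α) n (∏ i ∈ range m, (1 + (X : PowerSeries α) ^ (i + 1))) := by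
    convert partialGF_prop α n
      ((range m).map ⟨Nat.succ, Nat.succ_injective⟩) _ (fun _ => {0, 1}) (fun _ _ => Or.inl rfl)
      using 2
    · congr! with p
      rw [Multiset.nodup_iff_count_le_one]
      congr! 1 with i
      rcases Multiset.count i p.parts with (_ | _ | ms) <;> simp
    · simp_rw [Finset.prod_map, two_series]
      congr with i
      simp [Set.image_pair]
    · simp only [mem_map, Function.Embedding.coeFn_mk]
      rintro i ⟨_, _, rfl⟩
      apply Nat.succ_pos
  rw [← base, Nat.Partition.distincts]
  congr 2 with p
  simp only [mem_filter, mem_univ, true_and]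
  apply (and_iff_left _).symm
  intro i hi
  have : i ≤ n := by
    simpa [p.parts_sum] using Multiset.single_le_sum (fun _ _ => Nat.zero_le _) _ hi
  simp only [exists_prop, mem_range, Function.Embedding.coeFn_mk, mem_map]
  refine ⟨i - 1, ?_, Nat.succ_pred_eq_of_pos (p.parts_pos hi)⟩
  rw [tsub_lt_iff_right (Nat.one_le_iff_ne_zero.mpr (p.parts_pos hi).ne')]
  exact lt_of_le_of_lt this h

/-- number of all partitions of `n` equals coefficient of partial GF -/
theorem allGF_prop {α : Type*} [Field α] (n m : ℕ) (h : n < m + 1) :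
    (Fintype.card n.Partition : α) =
      coeff (R := α) n (∏ i ∈ range m, ((1 : PowerSeries α) - X ^ (i + 1))⁻¹) := by
  have base : #{p : n.Partition |
        (∀ j, p.parts.count j ∈ (Set.univ : Set ℕ)) ∧
        ∀ j ∈ p.parts, j ∈ (range m).map ⟨Nat.succ, Nat.succ_injective⟩} =
      coeff (R := α) n (∏ i ∈ range m, ((1 : PowerSeries α) - X ^ (i + 1))⁻¹) := by
    convert partialGF_prop α n
      ((range m).map ⟨Nat.succ, Nat.succ_injective⟩) _ (fun _ => Set.univ) (fun _ _ => trivial)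
      using 2
    · rw [Finset.prod_map]
      simp_rw [num_series']
      congr! 2 with x
      ext k
      constructor
      · rintro ⟨p, rfl⟩
        exact ⟨p, trivial, mul_comm _ _⟩
      · rintro ⟨a_w, -, rfl⟩
        exact Dvd.intro_left a_w rfl
    · simp only [mem_map, Function.Embedding.coeFn_mk]
      rintro i ⟨_, _, rfl⟩
      apply Nat.succ_pos
  rw [← base]
  norm_cast
  rw [Fintype.card]
  congr 1
  symm
  rw [Finset.filter_true_of_mem]
  intro p _
  refine ⟨fun j => trivial, fun i hi => ?_⟩
  have : i ≤ n := by
    simpa [p.parts_sum] using Multiset.single_le_sum (fun _ _ => Nat.zero_le _) _ hi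
  simp only [exists_prop, mem_range, Function.Embedding.coeFn_mk, mem_map]
  have hp := p.parts_pos hi
  exact ⟨i - 1, by omega, Nat.succ_pred_eq_of_pos hp⟩

end RB

namespace RB

theorem coeff_prod_stable (a : ℕ) (ha : 0 < a) {j m : ℕ} (h : j + 1 ≤ m) :
    coeff j (∏ k ∈ range m, (1 - (X : PowerSeries ℚ) ^ (a * (k + 1)))) =
      coeff j (eulerProd a) := by
  obtain ⟨t, rfl⟩ := Nat.exists_eq_add_of_le h
  rw [eulerProd, coeff_mk, Finset.prod_range_add]
  rw [coeff_mul_prod_one_sub_of_lt_order]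
  intro i _
  rw [order_X_pow]
  have : j < a * (j + 1 + i + 1) := by nlinarith
  exact_mod_cast this

theorem constantCoeff_eulerProd (a : ℕ) (ha : 0 < a) :
    constantCoeff (eulerProd a) = 1 := by
  have : constantCoeff (eulerProd a) = coeff 0 (eulerProd a) := by
    rw [coeff_zero_eq_constantCoeff]
  rw [this, eulerProd, coeff_mk]
  rw [coeff_zero_eq_constantCoeff, map_prod]
  apply Finset.prod_eq_one
  intro k _
  rw [map_sub, map_one, map_pow, constantCoeff_X, zero_pow, sub_zero]
  positivity

theorem coeff_mul_congr {F F' G G' : PowerSeries ℚ} (n : ℕ)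
    (hF : ∀ j ≤ n, coeff j F = coeff j F') (hG : ∀ j ≤ n, coeff j G = coeff j G') :
    coeff n (F * G) = coeff n (F' * G') := by
  rw [coeff_mul, coeff_mul]
  apply Finset.sum_congr rfl
  intro ij hij
  rw [HasAntidiagonal.mem_antidiagonal] at hij
  rw [hF ij.1 (by omega), hG ij.2 (by omega)]

/-- evenization: substitute `q ↦ q^2` (bare function) -/
noncomputable def evFun (F : PowerSeries ℚ) : PowerSeries ℚ :=
  PowerSeries.mk fun n => if Even n then coeff (n / 2) F else 0

theorem coeff_evFun (F : PowerSeries ℚ) (n : ℕ) :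
    coeff n (evFun F) = if Even n then coeff (n / 2) F else 0 :=
  coeff_mk _ _

theorem evFun_one : evFun 1 = 1 := by
  ext n
  rw [coeff_evFun]
  rcases Nat.even_or_odd n with he | ho
  · obtain ⟨m, rfl⟩ := he
    rw [if_pos ⟨m, rfl⟩, coeff_one, coeff_one]
    split_ifs <;> first | rfl | omega
  · rw [if_neg (Nat.not_even_iff_odd.mpr ho), coeff_one,
      if_neg (by rintro rfl; simp at ho)]

theorem evFun_mul (F G : PowerSeries ℚ) : evFun (F * G) = evFun F * evFun G := by
  ext n
  rw [coeff_evFun]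
  rcases Nat.even_or_odd n with he | ho
  · obtain ⟨m, rfl⟩ := he
    rw [if_pos ⟨m, rfl⟩]
    have h2 : (m + m) / 2 = m := by omega
    rw [h2, coeff_mul, coeff_mul]
    rw [Finset.Nat.sum_antidiagonal_eq_sum_range_succ_mk,
      Finset.Nat.sum_antidiagonal_eq_sum_range_succ_mk]
    have hfil := Finset.sum_filter_of_ne (s := range (m + m).succ)
      (f := fun k => coeff (k, m + m - k).1 (evFun F) * coeff (k, m + m - k).2 (evFun G))
      (p := fun k => Even k) ?_
    · rw [← hfil]
      refine Finset.sum_nbij' (i := fun k => 2 * k) (j := fun k => k / 2) ?_ ?_ ?_ ?_ ?_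
      · intro a ha
        simp only [mem_range] at ha
        simp only [mem_filter, mem_range]
        exact ⟨by omega, ⟨a, by omega⟩⟩
      · intro a ha
        simp only [mem_filter, mem_range] at ha
        obtain ⟨ha1, e, rfl⟩ := ha
        simp only [mem_range]
        omega
      · intro a _
        omega
      · intro a ha
        simp only [mem_filter, mem_range] at ha
        obtain ⟨ha1, e, rfl⟩ := ha
        omega
      · intro a ha
        simp only [mem_range] at ha
        dsimp only
        rw [coeff_evFun, coeff_evFun, if_pos (show Even (2 * a) from ⟨a, by omega⟩),
          if_pos (show Even (m + m - 2 * a) from ⟨m - a, by omega⟩)]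
        have e1 : 2 * a / 2 = a := by omega
        have e2 : (m + m - 2 * a) / 2 = m - a := by omega
        rw [e1, e2]
    · intro x _ hne
      by_contra hxo
      apply hne
      dsimp only
      rw [coeff_evFun, if_neg hxo, zero_mul]
  · rw [if_neg (Nat.not_even_iff_odd.mpr ho), coeff_mul]
    symm
    apply Finset.sum_eq_zero
    intro ij hij
    rw [HasAntidiagonal.mem_antidiagonal] at hij
    by_cases h1 : Even ij.1
    · have h2 : ¬ Even ij.2 := by
        intro h2
        exact (Nat.not_even_iff_odd.mpr ho) (by rw [← hij]; exact h1.add h2)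
      rw [coeff_evFun, coeff_evFun, if_neg h2, mul_zero]
    · rw [coeff_evFun, if_neg h1, zero_mul]

theorem evFun_zero : evFun 0 = 0 := by
  ext n
  rw [coeff_evFun]
  simp

theorem evFun_add (F G : PowerSeries ℚ) : evFun (F + G) = evFun F + evFun G := by
  ext n
  rw [map_add, coeff_evFun, coeff_evFun, coeff_evFun, map_add]
  split_ifs <;> simp

/-- evenization: substitute `q ↦ q^2` -/
noncomputable def ev : PowerSeries ℚ →+* PowerSeries ℚ where
  toFun := evFun
  map_one' := evFun_one
  map_mul' := evFun_mul
  map_zero' := evFun_zero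
  map_add' := evFun_add

theorem coeff_ev (F : PowerSeries ℚ) (n : ℕ) :
    coeff n (ev F) = if Even n then coeff (n / 2) F else 0 :=
  coeff_evFun F n

theorem ev_X_pow (e : ℕ) : ev ((X : PowerSeries ℚ) ^ e) = X ^ (2 * e) := by
  ext n
  rw [coeff_ev, coeff_X_pow, coeff_X_pow]
  rcases Nat.even_or_odd n with he | ho
  · obtain ⟨m, rfl⟩ := he
    rw [if_pos ⟨m, rfl⟩]
    have h2 : (m + m) / 2 = m := by omega
    rw [h2]
    split_ifs <;> first | rfl | omega
  · rw [if_neg (Nat.not_even_iff_odd.mpr ho), if_neg ?_]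
    rintro rfl
    exact (Nat.not_even_iff_odd.mpr ho) ⟨e, by omega⟩

theorem ev_eulerProd (a : ℕ) (ha : 0 < a) : ev (eulerProd a) = eulerProd (2 * a) := by
  ext n
  have hprod : (∏ k ∈ range (n + 1), (1 - (X : PowerSeries ℚ) ^ (2 * a * (k + 1)))) =
      ev (∏ k ∈ range (n + 1), (1 - (X : PowerSeries ℚ) ^ (a * (k + 1)))) := by
    rw [map_prod]
    refine Finset.prod_congr rfl fun k _ => ?_
    rw [map_sub, map_one, ev_X_pow, mul_assoc]
  rw [show coeff n (eulerProd (2 * a)) = coeff n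
    (∏ k ∈ range (n + 1), (1 - (X : PowerSeries ℚ) ^ (2 * a * (k + 1)))) from coeff_mk _ _]
  rw [hprod, coeff_ev, coeff_ev]
  split_ifs with h
  · exact (coeff_prod_stable a ha (Nat.succ_le_succ (Nat.div_le_self n 2))).symm
  · rfl

theorem part_le {n : ℕ} (p : n.Partition) {a : ℕ} (ha : a ∈ p.parts) : a ≤ n := by
  have := Multiset.single_le_sum (fun _ _ => Nat.zero_le _) a ha
  rwa [p.parts_sum] at this

theorem finite_aux {n : ℕ} (P : n.Partition × Finset ℕ → Prop)
    (hP : ∀ ps, P ps → ∀ x ∈ ps.2, x ∈ ps.1.parts) : Finite {ps // P ps} := by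
  have key : ∀ x : {ps // P ps}, x.1.2 ∈ (range (n + 1)).powerset := by
    intro x
    rw [mem_powerset]
    intro a ha
    have hmem := hP x.1 x.2 a ha
    exact mem_range.mpr (by have := part_le x.1.1 hmem; omega)
  apply Finite.of_injective
    (fun x : {ps // P ps} =>
      ((x.1.1, ⟨x.1.2, key x⟩) : n.Partition × ((range (n + 1)).powerset : Finset (Finset ℕ))))
  intro a b h
  apply Subtype.ext
  simp only [Prod.mk.injEq, Subtype.mk.injEq] at h
  exact Prod.ext h.1 h.2

theorem zero_parts {p : Nat.Partition 0} : p.parts = 0 := by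
  rw [Multiset.eq_zero_iff_forall_notMem]
  intro a ha
  have h1 := p.parts_pos ha
  have h2 := part_le p ha
  omega

theorem overp_zero' : Nat.card {ps : (Nat.Partition 0) × Finset ℕ // ∀ x ∈ ps.2, x ∈ ps.1.parts} = 1 := by
  rw [Nat.card_eq_one_iff_unique]
  constructor
  · constructor
    intro a b
    apply Subtype.ext
    apply Prod.ext
    · apply Nat.Partition.ext
      rw [zero_parts, zero_parts]
    · ext x
      constructor
      · intro hx
        have := a.2 x hx
        rw [zero_parts] at this
        simp at this
      · intro hx
        have := b.2 x hx
        rw [zero_parts] at this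
        simp at this
  · exact ⟨⟨(⟨0, by intro i h; simp at h, by simp⟩, ∅), by simp⟩⟩

namespace RB2

theorem sval_le {n : ℕ} (p : n.Partition) (S : Finset ℕ) (h : ∀ x ∈ S, x ∈ p.parts) :
    S.val ≤ p.parts := by
  rw [Multiset.le_iff_count]
  intro a
  by_cases ha : a ∈ S
  · rw [Multiset.count_eq_one_of_mem S.nodup ha]
    exact Multiset.one_le_count_iff_mem.mpr (h a ha)
  · rw [Multiset.count_eq_zero_of_notMem (by simpa using ha)]
    exact Nat.zero_le _

theorem sval_sum_le {n : ℕ} (p : n.Partition) (S : Finset ℕ) (h : ∀ x ∈ S, x ∈ p.parts) :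
    S.val.sum ≤ n := by
  obtain ⟨u, hu⟩ := Multiset.le_iff_exists_add.mp (sval_le p S h)
  have := p.parts_sum
  rw [hu, Multiset.sum_add] at this
  omega

/-- fibers of the overpartition type by the sum of the overlined parts -/
noncomputable def fiberEquiv (n i : ℕ) (hi : i ≤ n) :
    {x : {ps : n.Partition × Finset ℕ // ∀ a ∈ ps.2, a ∈ ps.1.parts} // x.1.2.val.sum = i} ≃
      {μ : i.Partition // μ.parts.Nodup} × (n - i).Partition where
  toFun x :=
    (⟨⟨x.1.1.2.val, fun ha => x.1.1.1.parts_pos (x.1.2 _ ha), x.2⟩, x.1.1.2.nodup⟩,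
     ⟨x.1.1.1.parts - x.1.1.2.val,
      fun ha => x.1.1.1.parts_pos (Multiset.mem_of_le tsub_le_self ha),
      by
        have hle := sval_le x.1.1.1 x.1.1.2 x.1.2
        have hc : x.1.1.1.parts - x.1.1.2.val + x.1.1.2.val = x.1.1.1.parts :=
          tsub_add_cancel_of_le hle
        have hs := x.1.1.1.parts_sum
        rw [← hc, Multiset.sum_add, x.2] at hs
        omega⟩)
  invFun y :=
    ⟨⟨⟨⟨y.1.1.parts + y.2.parts,
        fun ha => by
          rcases Multiset.mem_add.mp ha with h | h
          · exact y.1.1.parts_pos h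
          · exact y.2.parts_pos h,
        by rw [Multiset.sum_add, y.1.1.parts_sum, y.2.parts_sum]; omega⟩,
       y.1.1.parts.toFinset⟩,
      fun a ha => Multiset.mem_add.mpr (Or.inl (Multiset.mem_toFinset.mp ha))⟩,
     by
      rw [Multiset.toFinset_val, Multiset.dedup_eq_self.mpr y.1.2, y.1.1.parts_sum]⟩
  left_inv x := by
    apply Subtype.ext
    apply Subtype.ext
    apply Prod.ext
    · apply Nat.Partition.ext
      dsimp only
      have hle := sval_le x.1.1.1 x.1.1.2 x.1.2
      rw [add_comm]
      exact tsub_add_cancel_of_le hle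
    · dsimp only
      exact Finset.val_toFinset _
  right_inv y := by
    apply Prod.ext
    · apply Subtype.ext
      apply Nat.Partition.ext
      dsimp only
      rw [Multiset.toFinset_val, Multiset.dedup_eq_self.mpr y.1.2]
    · apply Nat.Partition.ext
      dsimp only
      rw [Multiset.toFinset_val, Multiset.dedup_eq_self.mpr y.1.2, add_tsub_cancel_left]

theorem overp_eq_sum' (n : ℕ) :
    Nat.card {ps : n.Partition × Finset ℕ // ∀ x ∈ ps.2, x ∈ ps.1.parts} =
      ∑ i ∈ range (n + 1),
        #(Nat.Partition.distincts i) * Fintype.card (Nat.Partition (n - i)) := by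
  have hfin : Finite {ps : n.Partition × Finset ℕ // ∀ x ∈ ps.2, x ∈ ps.1.parts} :=
    finite_aux _ (fun ps h => h)
  letI := Fintype.ofFinite {ps : n.Partition × Finset ℕ // ∀ x ∈ ps.2, x ∈ ps.1.parts}
  rw [Nat.card_eq_fintype_card, ← Finset.card_univ]
  rw [Finset.card_eq_sum_card_fiberwise (f := fun x => x.1.2.val.sum) (t := range (n + 1))
    (by intro x _
        dsimp only
        exact mem_range.mpr (by have := sval_sum_le x.1.1 x.1.2 x.2; omega))]
  apply Finset.sum_congr rfl
  intro i hi
  have h1 : #(univ.filter fun x : {ps : n.Partition × Finset ℕ // ∀ a ∈ ps.2, a ∈ ps.1.parts} =>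
      x.1.2.val.sum = i) = Fintype.card {x : {ps : n.Partition × Finset ℕ //
        ∀ a ∈ ps.2, a ∈ ps.1.parts} // x.1.2.val.sum = i} := (Fintype.card_subtype _).symm
  rw [h1, ← Nat.card_eq_fintype_card,
    Nat.card_congr (fiberEquiv n i (by rw [mem_range] at hi; omega)),
    Nat.card_prod, Nat.card_eq_fintype_card, Nat.card_eq_fintype_card]
  congr 1
  rw [Nat.Partition.distincts]
  exact Fintype.card_subtype _

end RB2
open RB2

namespace RB3

theorem rho_m_eq {m : ℕ} (p : Nat.Partition (m + m)) {m' : ℕ} (hmem : m' ∈ p.parts)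
    (hsum : (p.parts.erase m').sum = m') : m' = m := by
  have hc := Multiset.cons_erase hmem
  have hs := p.parts_sum
  rw [← hc, Multiset.sum_cons, hsum] at hs
  omega

/-- the partition `{m}` -/
def singlePart (m : ℕ) (hm : 0 < m) : Nat.Partition m :=
  ⟨{m}, fun hi => by rw [Multiset.mem_singleton] at hi; omega, by simp⟩

theorem parts_eq_singleton {m : ℕ} (p : Nat.Partition m) (hp : m ∈ p.parts) :
    p.parts = {m} := by
  have hc := Multiset.cons_erase hp
  have hs := p.parts_sum
  rw [← hc, Multiset.sum_cons] at hs
  have hz : (p.parts.erase m).sum = 0 := by omega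
  have he : p.parts.erase m = 0 := by
    rw [Multiset.eq_zero_iff_forall_notMem]
    intro a ha
    have h1 := p.parts_pos (Multiset.mem_of_mem_erase ha)
    have h2 := Multiset.single_le_sum (fun _ _ => Nat.zero_le _) a ha
    omega
  rw [← hc, he]
  rfl

/-- overpartitions of `m` containing the part `m`: exactly two -/
noncomputable def withMEquiv (m : ℕ) (hm : 0 < m) :
    {x : {ps : m.Partition × Finset ℕ // ∀ a ∈ ps.2, a ∈ ps.1.parts} //
      m ∈ x.1.1.parts} ≃ Bool where
  toFun x := m ∈ x.1.1.2
  invFun b :=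
    ⟨⟨⟨singlePart m hm, if b then {m} else ∅⟩, by
      intro a ha
      rcases b with _ | _
      · simp at ha
      · simp only [if_true] at ha
        rw [Finset.mem_singleton] at ha
        subst ha
        simp [singlePart]⟩, by simp [singlePart]⟩
  left_inv x := by
    apply Subtype.ext
    apply Subtype.ext
    apply Prod.ext
    · apply Nat.Partition.ext
      dsimp only [singlePart]
      exact (parts_eq_singleton x.1.1.1 x.2).symm
    · dsimp only
      have hsub : x.1.1.2 ⊆ {m} := by
        intro a ha
        have := x.1.2 a ha
        rw [parts_eq_singleton x.1.1.1 x.2, Multiset.mem_singleton] at this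
        simp [this]
      rcases Finset.subset_singleton_iff.mp hsub with h | h
      · simp only [h]
        simp only [decide_eq_true_eq]
        rw [if_neg (by simp [h])]
      · simp only [h]
        rw [if_pos (by simp [h])]
  right_inv b := by
    rcases b with _ | _ <;> simp

/-- overpartitions of `m` avoiding the part `m` are in bijection with the `rhoBar`
structures on `m + m` -/
noncomputable def withoutMEquiv (m : ℕ) (hm : 0 < m) :
    {x : {ps : m.Partition × Finset ℕ // ∀ a ∈ ps.2, a ∈ ps.1.parts} //
      m ∉ x.1.1.parts} ≃
    {ps : (m + m).Partition × Finset ℕ // ∃ l ∈ ps.1.parts, ps.1.parts.count l = 1 ∧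
      (∀ x ∈ ps.1.parts, x ≤ l) ∧ (ps.1.parts.erase l).sum = l ∧
      ∀ x ∈ ps.2, x ∈ ps.1.parts.erase l} where
  toFun x :=
    ⟨⟨⟨m ::ₘ x.1.1.1.parts,
        fun ha => by
          rcases Multiset.mem_cons.mp ha with h | h
          · omega
          · exact x.1.1.1.parts_pos h,
        by rw [Multiset.sum_cons, x.1.1.1.parts_sum]⟩,
      x.1.1.2⟩, by
      refine ⟨m, Multiset.mem_cons_self _ _, ?_, ?_, ?_, ?_⟩
      · rw [Multiset.count_cons_self, Multiset.count_eq_zero_of_notMem x.2]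
      · intro a ha
        rcases Multiset.mem_cons.mp ha with h | h
        · omega
        · exact part_le x.1.1.1 h
      · rw [Multiset.erase_cons_head, x.1.1.1.parts_sum]
      · intro a ha
        rw [Multiset.erase_cons_head]
        exact x.1.2 a ha⟩
  invFun y :=
    ⟨⟨⟨⟨y.1.1.parts.erase m,
        fun ha => y.1.1.parts_pos (Multiset.mem_of_mem_erase ha),
        by
          obtain ⟨l, hmem, hcount, hle, hsum, hS⟩ := y.2
          have hl : l = m := rho_m_eq y.1.1 hmem hsum
          subst hl
          exact hsum⟩,
       y.1.2⟩, by
      intro a ha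
      obtain ⟨l, hmem, hcount, hle, hsum, hS⟩ := y.2
      have hl : l = m := rho_m_eq y.1.1 hmem hsum
      subst hl
      exact hS a ha⟩, by
      obtain ⟨l, hmem, hcount, hle, hsum, hS⟩ := y.2
      have hl : l = m := rho_m_eq y.1.1 hmem hsum
      rw [hl] at hcount
      intro hcon
      have h0 : (0 : ℕ) < Multiset.count m (y.1.1.parts.erase m) :=
        Multiset.count_pos.mpr hcon
      have h1 : Multiset.count m (y.1.1.parts.erase m) = Multiset.count m y.1.1.parts - 1 :=
        Multiset.count_erase_self _ _
      omega⟩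
  left_inv x := by
    apply Subtype.ext
    apply Subtype.ext
    apply Prod.ext
    · apply Nat.Partition.ext
      dsimp only
      exact Multiset.erase_cons_head _ _
    · rfl
  right_inv y := by
    apply Subtype.ext
    apply Prod.ext
    · apply Nat.Partition.ext
      dsimp only
      obtain ⟨l, hmem, hcount, hle, hsum, hS⟩ := y.2
      have hl : l = m := rho_m_eq y.1.1 hmem hsum
      subst hl
      exact Multiset.cons_erase hmem
    · rfl

end RB3
open RB3

/-- number of overpartitions of `n` -/
noncomputable def overp (n : ℕ) : ℕ :=
  Nat.card {ps : n.Partition × Finset ℕ // ∀ x ∈ ps.2, x ∈ ps.1.parts}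

theorem overp_zero : overp 0 = 1 := overp_zero'


theorem overp_eq_sum (n : ℕ) :
    overp n = ∑ i ∈ range (n + 1),
      #(Nat.Partition.distincts i) * Fintype.card (Nat.Partition (n - i)) :=
  RB2.overp_eq_sum' n

/-- partition generating function -/
noncomputable def PGF : PowerSeries ℚ := PowerSeries.mk fun n => (Fintype.card n.Partition : ℚ)

/-- distinct partition generating function -/
noncomputable def DGF : PowerSeries ℚ :=
  PowerSeries.mk fun n => (#(Nat.Partition.distincts n) : ℚ)

/-- overpartition generating function -/
noncomputable def OGF : PowerSeries ℚ := PowerSeries.mk fun n => (overp n : ℚ)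

theorem PGF_mul_E1 : PGF * eulerProd 1 = 1 := by
  ext n
  have h1 : coeff n (PGF * eulerProd 1) =
      coeff n ((∏ i ∈ range (n + 1), ((1 : PowerSeries ℚ) - X ^ (i + 1))⁻¹) *
        ∏ k ∈ range (n + 1), (1 - (X : PowerSeries ℚ) ^ (1 * (k + 1)))) := by
    apply coeff_mul_congr
    · intro j hj
      rw [PGF, coeff_mk]
      exact allGF_prop j (n + 1) (by omega)
    · intro j hj
      exact (coeff_prod_stable 1 one_pos (by omega)).symm
  rw [h1]
  have h2 : (∏ i ∈ range (n + 1), ((1 : PowerSeries ℚ) - X ^ (i + 1))⁻¹) *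
      (∏ k ∈ range (n + 1), (1 - (X : PowerSeries ℚ) ^ (1 * (k + 1)))) = 1 := by
    rw [← Finset.prod_mul_distrib]
    apply Finset.prod_eq_one
    intro k _
    rw [one_mul]
    apply PowerSeries.inv_mul_cancel
    rw [map_sub, map_one, map_pow, constantCoeff_X, zero_pow (by omega), sub_zero]
    exact one_ne_zero
  rw [h2]

theorem DGF_mul_E1 : DGF * eulerProd 1 = eulerProd 2 := by
  ext n
  have h1 : coeff n (DGF * eulerProd 1) =
      coeff n ((∏ i ∈ range (n + 1), ((1 : PowerSeries ℚ) + X ^ (i + 1))) *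
        ∏ k ∈ range (n + 1), (1 - (X : PowerSeries ℚ) ^ (1 * (k + 1)))) := by
    apply coeff_mul_congr
    · intro j hj
      rw [DGF, coeff_mk]
      exact distinctGF_prop j (n + 1) (by omega)
    · intro j hj
      exact (coeff_prod_stable 1 one_pos (by omega)).symm
  rw [h1]
  have h2 : (∏ i ∈ range (n + 1), ((1 : PowerSeries ℚ) + X ^ (i + 1))) *
      (∏ k ∈ range (n + 1), (1 - (X : PowerSeries ℚ) ^ (1 * (k + 1)))) =
      ∏ k ∈ range (n + 1), (1 - (X : PowerSeries ℚ) ^ (2 * (k + 1))) := by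
    rw [← Finset.prod_mul_distrib]
    apply Finset.prod_congr rfl
    intro k _
    rw [one_mul, ← sq_sub_sq, one_pow, ← pow_mul, mul_comm (k + 1) 2]
  rw [h2]
  exact coeff_prod_stable 2 two_pos (by omega)

theorem OGF_eq : OGF = DGF * PGF := by
  ext n
  rw [OGF, coeff_mk, coeff_mul, Finset.Nat.sum_antidiagonal_eq_sum_range_succ_mk,
    overp_eq_sum]
  push_cast
  apply Finset.sum_congr rfl
  intro i _
  rw [DGF, PGF, coeff_mk, coeff_mk]

theorem OGF_E1_E1 : OGF * eulerProd 1 * eulerProd 1 = eulerProd 2 := by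
  rw [OGF_eq]
  calc DGF * PGF * eulerProd 1 * eulerProd 1
      = (DGF * eulerProd 1) * (PGF * eulerProd 1) := by ring
    _ = eulerProd 2 * 1 := by rw [DGF_mul_E1, PGF_mul_E1]
    _ = eulerProd 2 := mul_one _

theorem evOGF : eulerProd 4 * ((eulerProd 2)⁻¹) ^ 2 = ev OGF := by
  have h5 : ev OGF * eulerProd 2 * eulerProd 2 = eulerProd 4 := by
    have := congrArg ev OGF_E1_E1
    rw [map_mul, map_mul, ev_eulerProd 1 one_pos, ev_eulerProd 2 two_pos] at this
    rw [show (2 * 1 : ℕ) = 2 from rfl, show (2 * 2 : ℕ) = 4 from rfl] at this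
    exact this
  have hc : eulerProd 2 * (eulerProd 2)⁻¹ = 1 :=
    PowerSeries.mul_inv_cancel _ (by rw [constantCoeff_eulerProd 2 two_pos]; exact one_ne_zero)
  calc eulerProd 4 * ((eulerProd 2)⁻¹) ^ 2
      = (ev OGF * eulerProd 2 * eulerProd 2) * ((eulerProd 2)⁻¹) ^ 2 := by rw [h5]
    _ = ev OGF * (eulerProd 2 * (eulerProd 2)⁻¹) * (eulerProd 2 * (eulerProd 2)⁻¹) := by ring
    _ = ev OGF := by rw [hc, mul_one, mul_one]

end RB

/-- `ρ̄(n)`: the number of partitions of `n` whose largest part `m` occurs exactly once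
and whose remaining parts form an overpartition of `m`; an overpartition is recorded as
the underlying partition together with the set `S` of overlined part sizes. -/
noncomputable def rhoBar (n : ℕ) : ℕ :=
  Nat.card {ps : n.Partition × Finset ℕ // ∃ m ∈ ps.1.parts, ps.1.parts.count m = 1 ∧
    (∀ x ∈ ps.1.parts, x ≤ m) ∧ (ps.1.parts.erase m).sum = m ∧
    ∀ x ∈ ps.2, x ∈ ps.1.parts.erase m}

namespace RB

theorem rhoBar_eq_zero (n : ℕ) (h : ∀ m, 0 < m → n ≠ m + m) : rhoBar n = 0 := by
  have hemp : IsEmpty {ps : n.Partition × Finset ℕ // ∃ m ∈ ps.1.parts,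
      ps.1.parts.count m = 1 ∧ (∀ x ∈ ps.1.parts, x ≤ m) ∧ (ps.1.parts.erase m).sum = m ∧
      ∀ x ∈ ps.2, x ∈ ps.1.parts.erase m} := by
    constructor
    rintro ⟨⟨p, S⟩, ⟨l, hmem, hcount, hle, hsum, hS⟩⟩
    have hc := Multiset.cons_erase hmem
    have hs := p.parts_sum
    rw [← hc, Multiset.sum_cons, hsum] at hs
    exact h l (p.parts_pos hmem) hs.symm
  rw [rhoBar]
  exact Nat.card_of_isEmpty

theorem rhoBar_add_two (m : ℕ) (hm : 0 < m) : rhoBar (m + m) + 2 = overp m := by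
  classical
  have hfin : Finite {ps : m.Partition × Finset ℕ // ∀ x ∈ ps.2, x ∈ ps.1.parts} :=
    finite_aux _ (fun ps h => h)
  have e1 : Nat.card {x : {ps : m.Partition × Finset ℕ // ∀ a ∈ ps.2, a ∈ ps.1.parts} //
      m ∈ x.1.1.parts} = 2 := by
    rw [Nat.card_congr (RB3.withMEquiv m hm)]
    simp [Nat.card_eq_fintype_card]
  have e2 : rhoBar (m + m) = Nat.card {x : {ps : m.Partition × Finset ℕ //
      ∀ a ∈ ps.2, a ∈ ps.1.parts} // m ∉ x.1.1.parts} := by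
    rw [rhoBar]
    exact (Nat.card_congr (RB3.withoutMEquiv m hm)).symm
  rw [e2, overp,
    ← Nat.card_congr (Equiv.sumCompl (fun x : {ps : m.Partition × Finset ℕ //
      ∀ a ∈ ps.2, a ∈ ps.1.parts} => m ∈ x.1.1.parts)),
    Nat.card_sum, e1]
  omega

end RB

open RB in
/-- `∑ ρ̄(n) q^n = (q^4;q^4)_∞/(q^2;q^2)_∞^2 − 2/(1−q^2) + 1`. -/
theorem rhoBar_generating_function :
    PowerSeries.mk (fun n => (rhoBar n : ℚ)) =
      eulerProd 4 * ((eulerProd 2)⁻¹) ^ 2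
        - 2 * (1 - (PowerSeries.X : PowerSeries ℚ) ^ 2)⁻¹ + 1 := by
  rw [evOGF]
  have hind : ((1 : PowerSeries ℚ) - X ^ 2)⁻¹ = indicatorSeries ℚ {k | 2 ∣ k} := by
    rw [show (2 : ℕ) = 1 + 1 from rfl]
    exact num_series' 1
  ext n
  rw [coeff_mk, map_add, map_sub, coeff_ev, hind]
  have h2C : (2 : PowerSeries ℚ) = C 2 := (map_ofNat C 2).symm
  rw [h2C, coeff_C_mul, coeff_indicator, coeff_one]
  rcases Nat.even_or_odd n with he | ho
  · obtain ⟨m, rfl⟩ := he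
    rw [if_pos ⟨m, rfl⟩]
    have hm2 : (m + m) / 2 = m := by omega
    rw [hm2, OGF, coeff_mk, if_pos (show (m + m) ∈ {k | 2 ∣ k} from ⟨m, by omega⟩)]
    by_cases hm : m = 0
    · subst hm
      rw [if_pos rfl]
      rw [show rhoBar 0 = 0 from rhoBar_eq_zero 0 (by omega), overp_zero]
      norm_num
    · rw [if_neg (by omega)]
      have := rhoBar_add_two m (by omega)
      have hq : (rhoBar (m + m) : ℚ) + 2 = (overp m : ℚ) := by exact_mod_cast this
      push_cast
      linarith
  · have hne : ¬ Even n := Nat.not_even_iff_odd.mpr ho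
    rw [if_neg hne,
      if_neg (show ¬ n ∈ {k | 2 ∣ k} from fun hd => hne ((even_iff_two_dvd).mpr hd)),
      if_neg (show ¬ n = 0 from by rintro rfl; simp at ho),
      rhoBar_eq_zero n (by intro m hm hnm; exact hne ⟨m, hnm⟩)]
    norm_num
end RBAux
end

section
/- The generating function for ρ_pod(n) satisfies ∑_{n≥0} ρ_pod(n) q^n = (q^4;q^4)_∞/((q^2;q^2)_∞ (q^8;q^8)_∞) − 1/(1−q^2), as formal power series. -/
open PowerSeries Finset

/-- `ρ_pod(n)`: the number of partitions of `n` whose largest part `m` occurs exactly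
once and whose remaining parts form a partition of `m` with distinct odd parts
(even parts unrestricted). -/
noncomputable def rhoPod (n : ℕ) : ℕ :=
  Nat.card {p : n.Partition // ∃ m ∈ p.parts, p.parts.count m = 1 ∧
    (∀ x ∈ p.parts, x ≤ m) ∧ (p.parts.erase m).sum = m ∧
    ∀ x ∈ p.parts.erase m, Odd x → (p.parts.erase m).count x = 1}

namespace RhoPodAux

noncomputable section

open scoped Classical

universe u
variable {ι : Type u}
variable {α : Type*}

open Finset.HasAntidiagonal

def indicatorSeries (α : Type*) [Semiring α] (s : Set ℕ) : PowerSeries α :=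
  PowerSeries.mk fun n => if n ∈ s then 1 else 0

theorem coeff_indicator (s : Set ℕ) [Semiring α] (n : ℕ) :
    coeff n (indicatorSeries α s) = if n ∈ s then 1 else 0 :=
  coeff_mk _ _

theorem coeff_indicator_pos (s : Set ℕ) [Semiring α] (n : ℕ) (h : n ∈ s) :
    coeff n (indicatorSeries α s) = 1 := by rw [coeff_indicator, if_pos h]

theorem coeff_indicator_neg (s : Set ℕ) [Semiring α] (n : ℕ) (h : n ∉ s) :
    coeff n (indicatorSeries α s) = 0 := by rw [coeff_indicator, if_neg h]

theorem constantCoeff_indicator (s : Set ℕ) [Semiring α] :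
    constantCoeff (indicatorSeries α s) = if 0 ∈ s then 1 else 0 :=
  rfl

theorem two_series (i : ℕ) [Semiring α] :
    1 + (X : PowerSeries α) ^ i.succ = indicatorSeries α {0, i.succ} := by
  ext n
  simp only [coeff_indicator, coeff_one, coeff_X_pow, Set.mem_insert_iff, Set.mem_singleton_iff,
    map_add]
  cases' n with d
  · simp [(Nat.succ_ne_zero i).symm]
  · simp [Nat.succ_ne_zero d]

theorem num_series' [Field α] (i : ℕ) :
    (1 - (X : PowerSeries α) ^ (i + 1))⁻¹ = indicatorSeries α {k | i + 1 ∣ k} := by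
  rw [PowerSeries.inv_eq_iff_mul_eq_one]
  · ext n
    cases n with
    | zero => simp [mul_sub, zero_pow, constantCoeff_indicator]
    | succ n =>
      simp only [coeff_one, if_false, mul_sub, mul_one, coeff_indicator,
        LinearMap.map_sub, reduceCtorEq]
      simp_rw [coeff_mul, coeff_X_pow, coeff_indicator, @boole_mul _ _ _ _]
      simp only [← ite_and]
      erw [sum_boole]
      rw [sub_eq_zero]
      symm
      split_ifs with h
      · suffices #{a ∈ antidiagonal (n + 1) | i + 1 ∣ a.fst ∧ a.snd = i + 1} = 1 by
          simp only [Set.mem_setOf_eq]; convert congr_arg ((↑) : ℕ → α) this; norm_cast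
        rw [card_eq_one]
        cases' h with p hp
        refine ⟨((i + 1) * (p - 1), i + 1), ?_⟩
        ext ⟨a₁, a₂⟩
        simp only [mem_filter, Prod.mk_inj, Finset.HasAntidiagonal.mem_antidiagonal, mem_singleton]
        constructor
        · rintro ⟨a_left, ⟨a, rfl⟩, rfl⟩
          refine ⟨?_, rfl⟩
          rw [Nat.mul_sub_left_distrib, ← hp, ← a_left, mul_one, Nat.add_sub_cancel]
        · rintro ⟨rfl, rfl⟩
          match p with
          | 0 => rw [mul_zero] at hp; cases hp
          | p + 1 => rw [hp]; simp [mul_add]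
      · suffices #{a ∈ antidiagonal (n + 1) | i + 1 ∣ a.fst ∧ a.snd = i + 1} = 0 by
          simp only [Set.mem_setOf_eq]; convert congr_arg ((↑) : ℕ → α) this; norm_cast
        rw [card_eq_zero]
        apply eq_empty_of_forall_notMem
        simp only [Prod.forall, mem_filter, not_and, Finset.HasAntidiagonal.mem_antidiagonal]
        rintro _ h₁ h₂ ⟨a, rfl⟩ rfl
        apply h
        simp [← h₂]
  · simp [zero_pow]
-- The main workhorse of the partition theorem proof.
theorem partialGF_prop (α : Type*) [CommSemiring α] (n : ℕ) (s : Finset ℕ) (hs : ∀ i ∈ s, 0 < i)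
    (c : ℕ → Set ℕ) (hc : ∀ i, i ∉ s → 0 ∈ c i) :
    #{p : n.Partition | (∀ j, p.parts.count j ∈ c j) ∧ ∀ j ∈ p.parts, j ∈ s} =
      coeff n (∏ i ∈ s, indicatorSeries α ((· * i) '' c i)) := by
  simp_rw [coeff_prod, coeff_indicator, prod_boole, sum_boole]
  apply congr_arg
  simp only [mem_univ, forall_true_left, not_and, not_forall, exists_prop,
    Set.mem_image, not_exists]
  set φ : (a : Nat.Partition n) →
    a ∈ filter (fun p ↦ (∀ (j : ℕ), Multiset.count j p.parts ∈ c j) ∧ ∀ j ∈ p.parts, j ∈ s) univ →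
    ℕ →₀ ℕ := fun p _ => {
      toFun := fun i => Multiset.count i p.parts • i
      support := Finset.filter (fun i => i ≠ 0) p.parts.toFinset
      mem_support_toFun := fun a => by
        simp only [smul_eq_mul, ne_eq, mul_eq_zero, Multiset.count_eq_zero]
        rw [not_or, not_not]
        simp only [Multiset.mem_toFinset, not_not, mem_filter] }
  refine Finset.card_bij φ ?_ ?_ ?_
  · intro a ha
    simp only [φ, not_forall, not_exists, not_and, exists_prop, mem_filter]
    rw [mem_finsuppAntidiag]
    dsimp only [ne_eq, smul_eq_mul, id_eq, eq_mpr_eq_cast, le_eq_subset, Finsupp.coe_mk]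
    simp only [mem_univ, forall_true_left, not_and, not_forall, exists_prop,
      mem_filter, true_and] at ha
    refine ⟨⟨?_, fun i ↦ ?_⟩, fun i _ ↦ ⟨a.parts.count i, ha.1 i, rfl⟩⟩
    · conv_rhs => simp [← a.parts_sum]
      rw [sum_multiset_count_of_subset _ s]
      · simp only [smul_eq_mul]
      · intro i
        simp only [Multiset.mem_toFinset, not_not, mem_filter]
        apply ha.2
    · simp only [ne_eq, Multiset.mem_toFinset, not_not, mem_filter, and_imp]
      exact fun hi _ ↦ ha.2 i hi
  · intro p₁ hp₁ p₂ hp₂ h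
    apply Nat.Partition.ext
    simp only [true_and, mem_univ, mem_filter] at hp₁ hp₂
    ext i
    simp only [φ, ne_eq, Multiset.mem_toFinset, not_not, smul_eq_mul, Finsupp.mk.injEq] at h
    by_cases hi : i = 0
    · rw [hi]
      rw [Multiset.count_eq_zero_of_notMem]
      · rw [Multiset.count_eq_zero_of_notMem]
        intro a; exact Nat.lt_irrefl 0 (hs 0 (hp₂.2 0 a))
      intro a; exact Nat.lt_irrefl 0 (hs 0 (hp₁.2 0 a))
    · rw [← mul_left_inj' hi]
      rw [funext_iff] at h
      exact h.2 i
  · simp only [φ, mem_filter, mem_finsuppAntidiag, mem_univ, exists_prop, true_and, and_assoc]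
    rintro f ⟨hf, hf₃, hf₄⟩
    have hf' : f ∈ finsuppAntidiag s n := mem_finsuppAntidiag.mpr ⟨hf, hf₃⟩
    simp only [mem_finsuppAntidiag] at hf'
    refine ⟨⟨∑ i ∈ s, Multiset.replicate (f i / i) i, ?_, ?_⟩, ?_, ?_, ?_⟩
    · intro i hi
      simp only [exists_prop, Multiset.mem_sum, mem_map, Function.Embedding.coeFn_mk] at hi
      rcases hi with ⟨t, ht, z⟩
      apply hs
      rwa [Multiset.eq_of_mem_replicate z]
    · simp_rw [Multiset.sum_sum, Multiset.sum_replicate, Nat.nsmul_eq_mul]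
      rw [← hf'.1]
      refine sum_congr rfl fun i hi => Nat.div_mul_cancel ?_
      rcases hf₄ i hi with ⟨w, _, hw₂⟩
      rw [← hw₂]
      exact dvd_mul_left _ _
    · intro i
      simp_rw [Multiset.count_sum', Multiset.count_replicate, sum_ite_eq']
      split_ifs with h
      · rcases hf₄ i h with ⟨w, hw₁, hw₂⟩
        rwa [← hw₂, Nat.mul_div_cancel _ (hs i h)]
      · exact hc _ h
    · intro i hi
      rw [Multiset.mem_sum] at hi
      rcases hi with ⟨j, hj₁, hj₂⟩
      rwa [Multiset.eq_of_mem_replicate hj₂]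
    · ext i
      simp_rw [Multiset.count_sum', Multiset.count_replicate, sum_ite_eq']
      simp only [ne_eq, Multiset.mem_toFinset, not_not, smul_eq_mul, ite_mul,
        zero_mul, Finsupp.coe_mk]
      split_ifs with h
      · apply Nat.div_mul_cancel
        rcases hf₄ i h with ⟨w, _, hw₂⟩
        apply Dvd.intro_left _ hw₂
      · apply symm
        rw [← Finsupp.notMem_support_iff]
        exact notMem_mono hf'.2 h


/-! ### New material -/

/-- the special condition in `rhoPod` -/
def special (n : ℕ) (p : n.Partition) : Prop :=
  ∃ m ∈ p.parts, p.parts.count m = 1 ∧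
    (∀ x ∈ p.parts, x ≤ m) ∧ (p.parts.erase m).sum = m ∧
    ∀ x ∈ p.parts.erase m, Odd x → (p.parts.erase m).count x = 1

/-- doubled pod partitions: all parts even, parts ≡ 2 mod 4 distinct -/
def Dcond (n : ℕ) (p : n.Partition) : Prop :=
  (∀ j ∈ p.parts, 2 ∣ j) ∧ ∀ j, j % 4 = 2 → p.parts.count j ≤ 1

def Dnum (n : ℕ) : ℕ := Nat.card {p : n.Partition // Dcond n p}

theorem rhoPod_eq_card (n : ℕ) : rhoPod n = #(univ.filter (special n) : Finset n.Partition) := by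
  rw [rhoPod, Nat.card_eq_fintype_card, Fintype.card_subtype]
  rfl

theorem Dnum_eq_card (n : ℕ) : Dnum n = #(univ.filter (Dcond n) : Finset n.Partition) := by
  rw [Dnum, Nat.card_eq_fintype_card, Fintype.card_subtype]

theorem special_sum {n : ℕ} {p : n.Partition} {m : ℕ} (hm : m ∈ p.parts)
    (hsum : (p.parts.erase m).sum = m) : n = m + m := by
  conv_lhs => rw [← p.parts_sum, ← Multiset.cons_erase hm]
  rw [Multiset.sum_cons, hsum]

theorem special_iff {n : ℕ} (p : n.Partition) :
    special n p ↔ n / 2 ∈ p.parts ∧ p.parts.count (n / 2) = 1 ∧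
      (p.parts.erase (n / 2)).sum = n / 2 ∧
      ∀ x, Odd x → (p.parts.erase (n / 2)).count x ≤ 1 := by
  constructor
  · rintro ⟨m, hm, hcount, -, hsum, hodd⟩
    have hn : n = m + m := special_sum hm hsum
    have hm2 : m = n / 2 := by omega
    subst hm2
    refine ⟨hm, hcount, hsum, fun x hox => ?_⟩
    by_cases hx : x ∈ p.parts.erase (n / 2)
    · exact (hodd x hx hox).le
    · simp [Multiset.count_eq_zero_of_notMem hx]
  · rintro ⟨hm, hc, hs, hb⟩
    refine ⟨n / 2, hm, hc, fun x hxp => ?_, hs,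
      fun x hx hox => le_antisymm (hb x hox) (Multiset.one_le_count_iff_mem.mpr hx)⟩
    rw [← Multiset.cons_erase hm, Multiset.mem_cons] at hxp
    rcases hxp with rfl | hxe
    · exact le_rfl
    · calc x ≤ (p.parts.erase (n / 2)).sum :=
            Multiset.single_le_sum (fun _ _ => Nat.zero_le _) x hxe
        _ = n / 2 := hs

theorem rhoPod_zero : rhoPod 0 = 0 := by
  rw [rhoPod_eq_card, Finset.card_eq_zero, Finset.filter_eq_empty_iff]
  intro p _
  rw [special_iff]
  rintro ⟨hm, -⟩
  exact absurd (p.parts_pos hm) (lt_irrefl 0)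

theorem rhoPod_odd {n : ℕ} (h : ¬ 2 ∣ n) : rhoPod n = 0 := by
  rw [rhoPod_eq_card, Finset.card_eq_zero, Finset.filter_eq_empty_iff]
  intro p _
  rw [special_iff]
  rintro ⟨hm, -, hs, -⟩
  have := special_sum hm hs
  omega

theorem Dnum_odd {n : ℕ} (h : ¬ 2 ∣ n) : Dnum n = 0 := by
  rw [Dnum_eq_card, Finset.card_eq_zero, Finset.filter_eq_empty_iff]
  rintro p _ ⟨he, -⟩
  exact h (p.parts_sum ▸ Multiset.dvd_sum he)

theorem Dnum_zero : Dnum 0 = 1 := by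
  rw [Dnum, Nat.card_eq_fintype_card, Fintype.card_eq_one_iff]
  refine ⟨⟨default, ?_⟩, ?_⟩
  · constructor <;> simp [Nat.Partition.partition_zero_parts]
  · rintro ⟨p, hp⟩
    simp [Subsingleton.elim p default]

/-- doubling the residual partition -/
def dbl {n : ℕ} (p : n.Partition) (hsum : (p.parts.erase (n / 2)).sum = n / 2)
    (hn : n = n / 2 + n / 2) : n.Partition where
  parts := (p.parts.erase (n / 2)).map (2 * ·)
  parts_pos := by
    intro i hi
    obtain ⟨x, hx, rfl⟩ := Multiset.mem_map.mp hi
    have := p.parts_pos (Multiset.mem_of_mem_erase hx)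
    omega
  parts_sum := by
    have : ((p.parts.erase (n / 2)).map (fun x => 2 * id x)).sum
        = 2 * ((p.parts.erase (n / 2)).map id).sum := Multiset.sum_map_mul_left
    simp only [id, Multiset.map_id'] at this
    rw [this, hsum]
    omega

theorem two_mul_injective : Function.Injective (fun x : ℕ => 2 * x) :=
  fun a b h => by dsimp only at h; omega

theorem Dnum_even {n : ℕ} (h2 : 2 ∣ n) (h0 : n ≠ 0) : Dnum n = rhoPod n + 1 := by
  have hn : n = n / 2 + n / 2 := by omega
  have hpos : 0 < n / 2 := by omega
  set pn : n.Partition := ⟨{n}, by rintro i hi; rw [Multiset.mem_singleton] at hi; omega,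
    by simp⟩ with hpn_def
  rw [Dnum_eq_card, rhoPod_eq_card]
  have hpn : pn ∈ univ.filter (Dcond n) := by
    rw [Finset.mem_filter]
    refine ⟨Finset.mem_univ _, fun j hj => ?_, fun j _ => ?_⟩
    · rw [hpn_def] at hj
      rw [Multiset.mem_singleton] at hj
      omega
    · show Multiset.count j ({n} : Multiset ℕ) ≤ 1
      rw [Multiset.count_singleton]
      split <;> omega
  rw [← Finset.card_erase_add_one hpn]
  congr 1
  symm
  refine Finset.card_bij
    (fun p hp => dbl p ((special_iff p).mp (Finset.mem_filter.mp hp).2).2.2.1 hn) ?_ ?_ ?_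
  · -- maps into the target
    intro p hp
    obtain ⟨hm, hcount, hsum, hodd⟩ := (special_iff p).mp (Finset.mem_filter.mp hp).2
    rw [Finset.mem_erase]
    constructor
    · -- not the trivial partition
      intro hcontra
      have hparts : (p.parts.erase (n / 2)).map (2 * ·) = ({n} : Multiset ℕ) :=
        congrArg Nat.Partition.parts hcontra
      have h1 : ({n} : Multiset ℕ) = ({n / 2} : Multiset ℕ).map (2 * ·) := by
        simp; omega
      rw [h1] at hparts
      have herase : p.parts.erase (n / 2) = {n / 2} := Multiset.map_injective two_mul_injective hparts
      have : Multiset.count (n / 2) (p.parts.erase (n / 2)) = 0 := by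
        rw [Multiset.count_erase_self, hcount]
      rw [herase, Multiset.count_singleton, if_pos rfl] at this
      omega
    · rw [Finset.mem_filter]
      refine ⟨Finset.mem_univ _, fun j hj => ?_, fun j hj4 => ?_⟩
      · obtain ⟨x, hx, rfl⟩ := Multiset.mem_map.mp hj
        exact Dvd.intro x rfl
      · show Multiset.count j ((p.parts.erase (n / 2)).map (2 * ·)) ≤ 1
        have hj2 : j = 2 * (j / 2) := by omega
        rw [hj2, Multiset.count_map_eq_count' _ _ two_mul_injective]
        exact hodd _ ⟨j / 4, by omega⟩
  · -- injective
    intro p₁ hp₁ p₂ hp₂ h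
    obtain ⟨hm₁, -, -, -⟩ := (special_iff p₁).mp (Finset.mem_filter.mp hp₁).2
    obtain ⟨hm₂, -, -, -⟩ := (special_iff p₂).mp (Finset.mem_filter.mp hp₂).2
    have hparts : (p₁.parts.erase (n / 2)).map (2 * ·) = (p₂.parts.erase (n / 2)).map (2 * ·) :=
      congrArg Nat.Partition.parts h
    have := Multiset.map_injective two_mul_injective hparts
    apply Nat.Partition.ext
    rw [← Multiset.cons_erase hm₁, ← Multiset.cons_erase hm₂, this]
  · -- surjective
    intro b hb
    rw [Finset.mem_erase, Finset.mem_filter] at hb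
    obtain ⟨hbne, -, heven, hdist⟩ := hb
    have hbparts : b.parts = (b.parts.map (· / 2)).map (2 * ·) := by
      rw [Multiset.map_map]
      symm
      calc b.parts.map ((2 * ·) ∘ (· / 2)) = b.parts.map id := by
            apply Multiset.map_congr rfl
            intro x hx
            obtain ⟨t, rfl⟩ := heven x hx
            simp [Function.comp]
        _ = b.parts := Multiset.map_id _
    set r : Multiset ℕ := b.parts.map (· / 2) with hr
    have hrsum : r.sum = n / 2 := by
      have h1 : (r.map (fun x => 2 * id x)).sum = 2 * (r.map id).sum := Multiset.sum_map_mul_left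
      simp only [id, Multiset.map_id'] at h1
      rw [← hbparts] at h1
      have := b.parts_sum
      omega
    have hnr : n / 2 ∉ r := by
      intro hcontra
      have hmem : n ∈ b.parts := by
        have h2n : 2 * (n / 2) = n := by omega
        have hmm : 2 * (n / 2) ∈ r.map (2 * ·) := Multiset.mem_map_of_mem _ hcontra
        rw [h2n] at hmm
        rwa [hbparts]
      have hsum0 : (b.parts.erase n).sum = 0 := by
        have := b.parts_sum
        conv_lhs at this => rw [← Multiset.cons_erase hmem]
        rw [Multiset.sum_cons] at this
        omega
      have herase0 : b.parts.erase n = 0 := by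
        rw [Multiset.eq_zero_iff_forall_notMem]
        intro x hx
        have hxpos := b.parts_pos (Multiset.mem_of_mem_erase hx)
        have hxle := Multiset.single_le_sum (fun _ _ => Nat.zero_le _) x hx
        omega
      apply hbne
      apply Nat.Partition.ext
      rw [← Multiset.cons_erase hmem, herase0, hpn_def]
      rfl
    refine ⟨⟨(n / 2) ::ₘ r, ?_, ?_⟩, ?_, ?_⟩
    · intro i hi
      rw [Multiset.mem_cons] at hi
      rcases hi with rfl | hi
      · exact hpos
      · obtain ⟨x, hx, rfl⟩ := Multiset.mem_map.mp hi
        have h1 := b.parts_pos hx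
        obtain ⟨t, rfl⟩ := heven x hx
        omega
    · rw [Multiset.sum_cons, hrsum]
      omega
    · rw [Finset.mem_filter]
      refine ⟨Finset.mem_univ _, (special_iff _).mpr ?_⟩
      show n / 2 ∈ (n / 2) ::ₘ r ∧ Multiset.count (n / 2) ((n / 2) ::ₘ r) = 1 ∧
        (((n / 2) ::ₘ r).erase (n / 2)).sum = n / 2 ∧ _
      rw [Multiset.erase_cons_head]
      refine ⟨Multiset.mem_cons_self _ _, ?_, hrsum, fun x hox => ?_⟩
      · rw [Multiset.count_cons_self, Multiset.count_eq_zero_of_notMem hnr]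
      · have hcx : Multiset.count x r = Multiset.count (2 * x) b.parts := by
          rw [hbparts, Multiset.count_map_eq_count' _ _ two_mul_injective]
        rw [hcx]
        apply hdist
        obtain ⟨k, rfl⟩ := hox
        omega
    · apply Nat.Partition.ext
      show ((((n / 2) ::ₘ r).erase (n / 2)).map (2 * ·)) = b.parts
      rw [Multiset.erase_cons_head, ← hbparts]

theorem Dnum_eq (n : ℕ) : (Dnum n : ℚ) = rhoPod n + (if 2 ∣ n then 1 else 0) := by
  by_cases h2 : 2 ∣ n
  · rcases eq_or_ne n 0 with rfl | h0
    · simp [Dnum_zero, rhoPod_zero]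
    · rw [Dnum_even h2 h0, if_pos h2]
      push_cast
      ring
  · simp [Dnum_odd h2, rhoPod_odd h2, if_neg h2]

/-! ### Power series side -/

theorem pow_congr_ps {a b : ℕ} (h : a = b) :
    (1 - (X : PowerSeries ℚ) ^ a) = 1 - X ^ b := by rw [h]

theorem prod_range_two_mul {β : Type*} [CommMonoid β] (f : ℕ → β) (M : ℕ) :
    ∏ k ∈ range (2 * M), f k = (∏ i ∈ range M, f (2 * i)) * ∏ i ∈ range M, f (2 * i + 1) := by
  induction M with
  | zero => simp
  | succ M ih =>
    rw [Nat.mul_succ, show 2 * M + 2 = (2 * M + 1) + 1 from rfl, prod_range_succ,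
      prod_range_succ, ih, prod_range_succ, prod_range_succ, mul_assoc, mul_mul_mul_comm]

theorem coeff_eulerProd_eq {a : ℕ} (ha : 0 < a) (n N : ℕ) (hN : n < N) :
    coeff n (eulerProd a) =
      coeff n (∏ k ∈ range N, (1 - (X : PowerSeries ℚ) ^ (a * (k + 1)))) := by
  rw [eulerProd, coeff_mk]
  have key : ∀ N, n < N →
      coeff n (∏ k ∈ range N, (1 - (X : PowerSeries ℚ) ^ (a * (k + 1)))) =
      coeff n (∏ k ∈ range (n + 1), (1 - (X : PowerSeries ℚ) ^ (a * (k + 1)))) := by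
    intro N
    induction N with
    | zero => omega
    | succ N ih =>
      intro h
      rcases Nat.lt_or_ge n N with h' | h'
      · rw [prod_range_succ, ← ih h']
        have hm : ¬ a * (N + 1) ≤ n := by
          have : 1 * (N + 1) ≤ a * (N + 1) := Nat.mul_le_mul_right _ ha
          omega
        rw [mul_sub, mul_one, map_sub, coeff_mul_X_pow', if_neg hm, sub_zero]
      · have hNn : N = n := by omega
        subst hNn
        rfl
  exact (key N hN).symm

theorem coeff_mul_right_congr {f g g' : PowerSeries ℚ} {n : ℕ}
    (h : ∀ k ≤ n, coeff k g = coeff k g') :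
    coeff n (f * g) = coeff n (f * g') := by
  rw [coeff_mul, coeff_mul]
  refine Finset.sum_congr rfl ?_
  rintro ⟨i, j⟩ hij
  rw [Finset.HasAntidiagonal.mem_antidiagonal] at hij
  rw [h j (by omega)]

theorem coeff_mul_left_congr {f f' g : PowerSeries ℚ} {n : ℕ}
    (h : ∀ k ≤ n, coeff k f = coeff k f') :
    coeff n (f * g) = coeff n (f' * g) := by
  rw [mul_comm f g, mul_comm f' g]
  exact coeff_mul_right_congr h

theorem constantCoeff_eulerProd {a : ℕ} (ha : a ≠ 0) :
    constantCoeff (eulerProd a) = 1 := by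
  rw [eulerProd, constantCoeff_mk]
  rw [show (0 : ℕ) + 1 = 1 from rfl, prod_range_one]
  simp [ha]

/-- `Dnum` is the coefficient of the partial pod-type generating function. -/
theorem Dnum_coeff (M n : ℕ) (hn : n < 2 * M) :
    (Dnum n : ℚ) = coeff n ((∏ i ∈ range M, (1 + (X : PowerSeries ℚ) ^ (4 * i + 2))) *
      ∏ i ∈ range M, (1 - (X : PowerSeries ℚ) ^ (4 * i + 4))⁻¹) := by
  have hemb : Function.Injective (fun j : ℕ => 2 * (j + 1)) := fun a b h => by
    dsimp only at h; omega
  set s : Finset ℕ := (range (2 * M)).map ⟨fun j => 2 * (j + 1), hemb⟩ with hs_def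
  set c : ℕ → Set ℕ := fun j => if j % 4 = 2 then {0, 1} else Set.univ with hc_def
  have hprop := partialGF_prop ℚ n s
    (by
      rintro i hi
      rw [hs_def, Finset.mem_map] at hi
      obtain ⟨j, -, rfl⟩ := hi
      simp only [Function.Embedding.coeFn_mk]
      omega)
    c
    (by
      intro i _
      simp only [hc_def]
      split
      · exact Set.mem_insert 0 _
      · trivial)
  have hcard : #{p : n.Partition | (∀ j, p.parts.count j ∈ c j) ∧ ∀ j ∈ p.parts, j ∈ s}
      = #(univ.filter (Dcond n) : Finset n.Partition) := by
    congr 1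
    ext p
    simp only [Finset.mem_filter, Finset.mem_univ, true_and]
    constructor
    · rintro ⟨hcount, hmem⟩
      constructor
      · intro j hj
        have := hmem j hj
        rw [hs_def, Finset.mem_map] at this
        obtain ⟨t, -, rfl⟩ := this
        exact ⟨t + 1, rfl⟩
      · intro j hj4
        have := hcount j
        simp only [hc_def] at this
        rw [if_pos hj4] at this
        rcases this with h | h
        · omega
        · rw [Set.mem_singleton_iff] at h
          omega
    · rintro ⟨heven, hdist⟩
      constructor
      · intro j
        simp only [hc_def]
        split
        · rename_i hj4
          have := hdist j hj4
          interval_cases h : Multiset.count j p.parts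
          · exact Set.mem_insert 0 _
          · exact Set.mem_insert_of_mem _ rfl
        · trivial
      · intro j hj
        have hje := heven j hj
        have hjpos := p.parts_pos hj
        have hjle : j ≤ n := by
          have := Multiset.single_le_sum (fun _ _ => Nat.zero_le _) j hj
          rw [p.parts_sum] at this
          exact this
        rw [hs_def, Finset.mem_map]
        refine ⟨j / 2 - 1, Finset.mem_range.mpr (by omega), ?_⟩
        simp only [Function.Embedding.coeFn_mk]
        omega
  have hprod : ∏ i ∈ s, indicatorSeries ℚ ((· * i) '' c i) =
      (∏ i ∈ range M, (1 + (X : PowerSeries ℚ) ^ (4 * i + 2))) *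
        ∏ i ∈ range M, (1 - (X : PowerSeries ℚ) ^ (4 * i + 4))⁻¹ := by
    rw [hs_def, Finset.prod_map]
    simp only [Function.Embedding.coeFn_mk]
    rw [prod_range_two_mul (fun j => indicatorSeries ℚ ((· * (2 * (j + 1))) '' c (2 * (j + 1)))) M]
    congr 1
    · refine Finset.prod_congr rfl fun i _ => ?_
      have h4 : 2 * (2 * i + 1) = 4 * i + 2 := by omega
      have hmod : (4 * i + 2) % 4 = 2 := by omega
      rw [h4]
      simp only [hc_def]
      rw [if_pos hmod]
      have himg : (· * (4 * i + 2)) '' {0, 1} = {0, 4 * i + 2} := by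
        rw [Set.image_pair]
        simp
      rw [himg, show 4 * i + 2 = (4 * i + 1).succ from rfl, ← two_series]
    · refine Finset.prod_congr rfl fun i _ => ?_
      have h4 : 2 * (2 * i + 1 + 1) = 4 * i + 4 := by omega
      have hmod : ¬ (4 * i + 4) % 4 = 2 := by omega
      rw [h4]
      simp only [hc_def]
      rw [if_neg hmod]
      have himg : (· * (4 * i + 4)) '' Set.univ = {k | 4 * i + 4 ∣ k} := by
        ext k
        simp only [Set.image_univ, Set.mem_range, Set.mem_setOf_eq]
        constructor
        · rintro ⟨t, rfl⟩
          exact Dvd.intro_left t rfl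
        · rintro ⟨t, rfl⟩
          exact ⟨t, mul_comm _ _⟩
      rw [himg, show 4 * i + 4 = (4 * i + 3) + 1 from rfl, ← num_series']
  rw [← hprod, ← hprop, hcard]
  rw [Dnum_eq_card]

set_option maxHeartbeats 1000000 in
/-- the exact finite product identity -/
theorem prod_identity (M : ℕ) :
    ((∏ i ∈ range M, (1 + (X : PowerSeries ℚ) ^ (4 * i + 2))) *
        ∏ i ∈ range M, (1 - (X : PowerSeries ℚ) ^ (4 * i + 4))⁻¹) *
      (∏ k ∈ range (2 * M), (1 - (X : PowerSeries ℚ) ^ (2 * (k + 1)))) *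
      (∏ k ∈ range M, (1 - (X : PowerSeries ℚ) ^ (8 * (k + 1)))) =
    ∏ k ∈ range (2 * M), (1 - (X : PowerSeries ℚ) ^ (4 * (k + 1))) := by
  have e2 : ∏ k ∈ range (2 * M), (1 - (X : PowerSeries ℚ) ^ (2 * (k + 1))) =
      (∏ i ∈ range M, (1 - (X : PowerSeries ℚ) ^ (4 * i + 2))) *
        ∏ i ∈ range M, (1 - (X : PowerSeries ℚ) ^ (4 * i + 4)) := by
    have split2 : ∏ k ∈ range (2 * M), (1 - (X : PowerSeries ℚ) ^ (2 * (k + 1))) =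
        (∏ i ∈ range M, (1 - (X : PowerSeries ℚ) ^ (2 * (2 * i + 1)))) *
          ∏ i ∈ range M, (1 - (X : PowerSeries ℚ) ^ (2 * (2 * i + 1 + 1))) :=
      prod_range_two_mul (fun k => 1 - (X : PowerSeries ℚ) ^ (2 * (k + 1))) M
    have n2a : ∏ i ∈ range M, (1 - (X : PowerSeries ℚ) ^ (2 * (2 * i + 1))) =
        ∏ i ∈ range M, (1 - (X : PowerSeries ℚ) ^ (4 * i + 2)) :=
      Finset.prod_congr rfl fun i _ => pow_congr_ps (by ring)
    have n2b : ∏ i ∈ range M, (1 - (X : PowerSeries ℚ) ^ (2 * (2 * i + 1 + 1))) =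
        ∏ i ∈ range M, (1 - (X : PowerSeries ℚ) ^ (4 * i + 4)) :=
      Finset.prod_congr rfl fun i _ => pow_congr_ps (by ring)
    rw [split2, n2a, n2b]
  have e4 : ∏ k ∈ range (2 * M), (1 - (X : PowerSeries ℚ) ^ (4 * (k + 1))) =
      (∏ i ∈ range M, (1 - (X : PowerSeries ℚ) ^ (8 * i + 4))) *
        ∏ i ∈ range M, (1 - (X : PowerSeries ℚ) ^ (8 * i + 8)) := by
    have split4 : ∏ k ∈ range (2 * M), (1 - (X : PowerSeries ℚ) ^ (4 * (k + 1))) =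
        (∏ i ∈ range M, (1 - (X : PowerSeries ℚ) ^ (4 * (2 * i + 1)))) *
          ∏ i ∈ range M, (1 - (X : PowerSeries ℚ) ^ (4 * (2 * i + 1 + 1))) :=
      prod_range_two_mul (fun k => 1 - (X : PowerSeries ℚ) ^ (4 * (k + 1))) M
    have n4a : ∏ i ∈ range M, (1 - (X : PowerSeries ℚ) ^ (4 * (2 * i + 1))) =
        ∏ i ∈ range M, (1 - (X : PowerSeries ℚ) ^ (8 * i + 4)) :=
      Finset.prod_congr rfl fun i _ => pow_congr_ps (by ring)
    have n4b : ∏ i ∈ range M, (1 - (X : PowerSeries ℚ) ^ (4 * (2 * i + 1 + 1))) =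
        ∏ i ∈ range M, (1 - (X : PowerSeries ℚ) ^ (8 * i + 8)) :=
      Finset.prod_congr rfl fun i _ => pow_congr_ps (by ring)
    rw [split4, n4a, n4b]
  have e8 : ∏ k ∈ range M, (1 - (X : PowerSeries ℚ) ^ (8 * (k + 1))) =
      ∏ i ∈ range M, (1 - (X : PowerSeries ℚ) ^ (8 * i + 8)) :=
    Finset.prod_congr rfl fun i _ => pow_congr_ps (by ring)
  have einv : (∏ i ∈ range M, (1 - (X : PowerSeries ℚ) ^ (4 * i + 4))⁻¹) *
      (∏ i ∈ range M, (1 - (X : PowerSeries ℚ) ^ (4 * i + 4))) = 1 := by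
    rw [← Finset.prod_mul_distrib]
    have hone : ∀ i ∈ range M,
        (1 - (X : PowerSeries ℚ) ^ (4 * i + 4))⁻¹ * (1 - (X : PowerSeries ℚ) ^ (4 * i + 4)) = 1 := by
      intro i _
      apply PowerSeries.inv_mul_cancel
      simp
    rw [Finset.prod_congr rfl hone, Finset.prod_const_one]
  have emul : (∏ i ∈ range M, (1 + (X : PowerSeries ℚ) ^ (4 * i + 2))) *
      (∏ i ∈ range M, (1 - (X : PowerSeries ℚ) ^ (4 * i + 2))) =
      ∏ i ∈ range M, (1 - (X : PowerSeries ℚ) ^ (8 * i + 4)) := by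
    rw [← Finset.prod_mul_distrib]
    refine Finset.prod_congr rfl fun i _ => ?_
    have : (1 + (X : PowerSeries ℚ) ^ (4 * i + 2)) * (1 - X ^ (4 * i + 2)) =
        1 - (X ^ (4 * i + 2)) ^ 2 := by ring
    rw [this, ← pow_mul]
    exact pow_congr_ps (by ring)
  rw [e2, e4, e8]
  set Ap := ∏ i ∈ range M, (1 + (X : PowerSeries ℚ) ^ (4 * i + 2)) with hAp
  set Bi := ∏ i ∈ range M, (1 - (X : PowerSeries ℚ) ^ (4 * i + 4))⁻¹ with hBi
  set B := ∏ i ∈ range M, (1 - (X : PowerSeries ℚ) ^ (4 * i + 4)) with hB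
  set C := ∏ i ∈ range M, (1 - (X : PowerSeries ℚ) ^ (4 * i + 2)) with hC
  set D := ∏ i ∈ range M, (1 - (X : PowerSeries ℚ) ^ (8 * i + 8)) with hD
  set E := ∏ i ∈ range M, (1 - (X : PowerSeries ℚ) ^ (8 * i + 4)) with hE
  have hre : Ap * Bi * (C * B) * D = (Ap * C) * (Bi * B) * D := by ring
  rw [hre, einv, emul, mul_one]

/-- the pod-type generating function -/
def G : PowerSeries ℚ := PowerSeries.mk fun n => (Dnum n : ℚ)

theorem eulerProd_four_eq : eulerProd 4 = G * eulerProd 2 * eulerProd 8 := by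
  ext n
  set M : ℕ := n + 1 with hM
  have h4 : coeff n (eulerProd 4) =
      coeff n (∏ k ∈ range (2 * M), (1 - (X : PowerSeries ℚ) ^ (4 * (k + 1)))) :=
    coeff_eulerProd_eq (by norm_num) n (2 * M) (by omega)
  have step1 : coeff n (G * eulerProd 2 * eulerProd 8) =
      coeff n (G * eulerProd 2 * ∏ k ∈ range M, (1 - (X : PowerSeries ℚ) ^ (8 * (k + 1)))) :=
    coeff_mul_right_congr fun k hk => coeff_eulerProd_eq (by norm_num) k M (by omega)
  have step2 : ∀ j ≤ n, coeff j (G * eulerProd 2) =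
      coeff j (G * ∏ k ∈ range (2 * M), (1 - (X : PowerSeries ℚ) ^ (2 * (k + 1)))) :=
    fun j hj => coeff_mul_right_congr fun k hk =>
      coeff_eulerProd_eq (by norm_num) k (2 * M) (by omega)
  have step3 : ∀ j ≤ n, coeff j G =
      coeff j ((∏ i ∈ range M, (1 + (X : PowerSeries ℚ) ^ (4 * i + 2))) *
        ∏ i ∈ range M, (1 - (X : PowerSeries ℚ) ^ (4 * i + 4))⁻¹) := by
    intro j hj
    rw [G, coeff_mk]
    exact Dnum_coeff M j (by omega)
  rw [h4, step1]
  rw [coeff_mul_left_congr step2]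
  rw [coeff_mul_left_congr (fun j hj => coeff_mul_left_congr (fun k hk => step3 k (by omega)))]
  rw [prod_identity M]

end

end RhoPodAux

open RhoPodAux in
/-- `∑ ρ_pod(n) q^n = (q^4;q^4)_∞/((q^2;q^2)_∞ (q^8;q^8)_∞) − 1/(1−q^2)`. -/
theorem rhoPod_generating_function :
    PowerSeries.mk (fun n => (rhoPod n : ℚ)) =
      eulerProd 4 * (eulerProd 2)⁻¹ * (eulerProd 8)⁻¹
        - (1 - (PowerSeries.X : PowerSeries ℚ) ^ 2)⁻¹ := by
  classical
  have h2 : constantCoeff (eulerProd 2) ≠ 0 := by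
    rw [constantCoeff_eulerProd (by norm_num)]; norm_num
  have h8 : constantCoeff (eulerProd 8) ≠ 0 := by
    rw [constantCoeff_eulerProd (by norm_num)]; norm_num
  have hG : eulerProd 4 * (eulerProd 2)⁻¹ * (eulerProd 8)⁻¹ = G := by
    rw [eulerProd_four_eq]
    calc G * eulerProd 2 * eulerProd 8 * (eulerProd 2)⁻¹ * (eulerProd 8)⁻¹
        = G * (eulerProd 2 * (eulerProd 2)⁻¹) * (eulerProd 8 * (eulerProd 8)⁻¹) := by ring
      _ = G := by
          rw [PowerSeries.mul_inv_cancel _ h2, PowerSeries.mul_inv_cancel _ h8, mul_one, mul_one]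
  rw [hG]
  ext n
  rw [map_sub, G, coeff_mk, coeff_mk]
  have hx : (1 - (PowerSeries.X : PowerSeries ℚ) ^ 2)⁻¹ = indicatorSeries ℚ {k | 2 ∣ k} := by
    rw [show (2 : ℕ) = 1 + 1 from rfl, num_series']
  rw [hx, coeff_indicator, Dnum_eq]
  simp only [Set.mem_setOf_eq]
  ring
end
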